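/- arXiv:2202.09241 — 2 statements merged into one kernel-verified Lean document; each statement's English description precedes it below -/
import Mathlib

section
/- Let n ≥ 1, Q = 2n+2, α > Q, p_α = 2Q/(Q+α), and let p ∈ (0, p_α). Then there exists a positive constant C̃ = C(Q, α, p) such that for all nonnegative f, g ∈ L^p(𝕊^{2n+1}), ∫_{𝕊^{2n+1}}∫_{𝕊^{2n+1}} f(ξ) g(η) |1 − ξ·η̄|^{(α−Q)/2} dξ dη ≥ C̃ ‖f‖_{L^p(𝕊^{2n+1})} ‖g‖_{L^p(𝕊^{2n+1})}. -/
open MeasureTheory ENNReal Filter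

noncomputable section

instance (m : ℕ) : MeasurableSpace (EuclideanSpace ℂ (Fin m)) := borel _
instance (m : ℕ) : BorelSpace (EuclideanSpace ℂ (Fin m)) := ⟨rfl⟩
instance (m : ℕ) : InnerProductSpace ℝ (EuclideanSpace ℂ (Fin m)) :=
  InnerProductSpace.complexToReal

/-- The unit sphere `𝕊^{2n+1} ⊂ ℂ^{n+1}`. -/
abbrev Sph (n : ℕ) := Metric.sphere (0 : EuclideanSpace ℂ (Fin (n + 1))) 1

/-- Euclidean surface measure on the unit sphere of `ℂ^{n+1}`. -/
def sphMeasure (n : ℕ) : Measure (Sph n) :=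
  (volume : Measure (EuclideanSpace ℂ (Fin (n + 1)))).toSphere

/-- The quantity `1 - ξ·conj η` for points of the sphere. -/
def oneSubPair {n : ℕ} (ξ η : Sph n) : ℂ :=
  1 - ∑ j, (ξ : EuclideanSpace ℂ (Fin (n + 1))) j *
    (starRingEnd ℂ) ((η : EuclideanSpace ℂ (Fin (n + 1))) j)

/-- The double integral `∫∫ f(ξ) g(η) |1 - ξ·conj η|^e dξ dη` on the sphere. -/
def dblInt (n : ℕ) (e : ℝ) (f g : Sph n → ℝ) : ℝ≥0∞ :=
  ∫⁻ ξ, ∫⁻ η, ENNReal.ofReal (f ξ) * ENNReal.ofReal (g η) *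
    ENNReal.ofReal (‖oneSubPair ξ η‖ ^ e) ∂(sphMeasure n) ∂(sphMeasure n)

/-- The `L^p` "norm" `(∫ f^p)^(1/p)` on the sphere (allowing `0 < p < 1`). -/
def lpS (n : ℕ) (p : ℝ) (f : Sph n → ℝ) : ℝ≥0∞ :=
  (∫⁻ ξ, ENNReal.ofReal (f ξ) ^ p ∂(sphMeasure n)) ^ (1 / p)


namespace HLSaux

variable {n : ℕ}

lemma finrank_real_E (n : ℕ) : Module.finrank ℝ (EuclideanSpace ℂ (Fin (n+1))) = 2*(n+1) := by
  rw [← Module.finrank_mul_finrank ℝ ℂ (EuclideanSpace ℂ (Fin (n+1))),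
    Complex.finrank_real_complex, finrank_euclideanSpace_fin]

lemma real_inner_E (x y : EuclideanSpace ℂ (Fin (n+1))) :
    inner ℝ x y = Complex.re (inner ℂ x y) := rfl

def rbVec (n : ℕ) : Fin (n+1) ⊕ Fin (n+1) → EuclideanSpace ℂ (Fin (n+1)) :=
  Sum.elim (fun j => EuclideanSpace.single j 1) (fun j => EuclideanSpace.single j Complex.I)

lemma orthonormal_rbVec (n : ℕ) : Orthonormal ℝ (rbVec n) := by
  rw [orthonormal_iff_ite]
  intro i j
  rcases i with i | i <;> rcases j with j | j <;>
    · simp only [rbVec, Sum.elim_inl, Sum.elim_inr, real_inner_E,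
        EuclideanSpace.inner_single_left, EuclideanSpace.single_apply]
      split_ifs with h1 h2 h3 <;>
      simp_all [eq_comm, Complex.ext_iff]

def rONB (n : ℕ) : OrthonormalBasis (Fin (n+1) ⊕ Fin (n+1)) ℝ (EuclideanSpace ℂ (Fin (n+1))) :=
  OrthonormalBasis.mk (orthonormal_rbVec n) (by
    rw [(orthonormal_rbVec n).linearIndependent.span_eq_top_of_card_eq_finrank
      (by simp [finrank_real_E, Fintype.card_sum]; ring)])

lemma rONB_repr_inl (z : EuclideanSpace ℂ (Fin (n+1))) (j : Fin (n+1)) :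
    (rONB n).repr z (Sum.inl j) = (z j).re := by
  rw [(rONB n).repr_apply_apply, rONB, OrthonormalBasis.coe_mk]
  simp [rbVec, real_inner_E, EuclideanSpace.inner_single_left]

lemma rONB_repr_inr (z : EuclideanSpace ℂ (Fin (n+1))) (j : Fin (n+1)) :
    (rONB n).repr z (Sum.inr j) = (z j).im := by
  rw [(rONB n).repr_apply_apply, rONB, OrthonormalBasis.coe_mk]
  simp [rbVec, real_inner_E, EuclideanSpace.inner_single_left,
    apply_ite Complex.re, apply_ite Complex.im, Finset.sum_ite_eq']

end HLSaux

namespace HLSaux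

lemma exists_cONB (n : ℕ) (ξ : EuclideanSpace ℂ (Fin (n+1))) (hξ : ‖ξ‖ = 1) :
    ∃ b : OrthonormalBasis (Fin (n+1)) ℂ (EuclideanSpace ℂ (Fin (n+1))), b 0 = ξ := by
  have horth : Orthonormal ℂ (Set.restrict {(0 : Fin (n+1))} (fun _ => ξ)) := by
    constructor
    · intro i; exact hξ
    · intro i j hij
      exact absurd (Subtype.ext ((Set.mem_singleton_iff.mp i.prop).trans
        (Set.mem_singleton_iff.mp j.prop).symm)) hij
  obtain ⟨b, hb⟩ := horth.exists_orthonormalBasis_extension_of_card_eq (by simp)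
  exact ⟨b, hb 0 rfl⟩

lemma T0_mem_box {n : ℕ} {s : ℝ} (hs : 0 ≤ s) {z : EuclideanSpace ℂ (Fin (n+1))}
    (h1 : ‖z‖ ≤ 1) (h2 : ‖(‖z‖:ℂ) - z 0‖ ≤ s) :
    |(z 0).re| ≤ 1 ∧ |(z 0).im| ≤ s ∧
      ∀ j : Fin (n+1), j ≠ 0 → ‖z j‖ ≤ Real.sqrt (2*s) := by
  have hN0 : (0:ℝ) ≤ ‖z‖ := norm_nonneg z
  have hsum : ‖z‖^2 = ∑ i, ‖z i‖^2 := by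
    rw [EuclideanSpace.norm_eq]
    rw [Real.sq_sqrt (Finset.sum_nonneg fun i _ => sq_nonneg _)]
  have habs_le : ∀ j : Fin (n+1), j ≠ 0 →
      ‖z j‖^2 + ‖z 0‖^2 ≤ ‖z‖^2 := by
    intro j hj
    have hp := Finset.sum_pair (f := fun i => ‖z i‖^2) hj
    rw [hsum, ← hp]
    exact Finset.sum_le_sum_of_subset_of_nonneg (Finset.subset_univ _)
      (fun i _ _ => sq_nonneg _)
  have habs0 : ‖z 0‖^2 ≤ ‖z‖^2 := by
    rw [hsum]
    exact Finset.single_le_sum (f := fun i => ‖z i‖^2)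
      (fun i _ => sq_nonneg _) (Finset.mem_univ 0)
  have hb0 : ‖z 0‖ ≤ ‖z‖ := by
    nlinarith [norm_nonneg (z 0)]
  have hre0 : |(z 0).re| ≤ ‖z 0‖ := Complex.abs_re_le_norm _
  have him0 : |(z 0).im| ≤ ‖z 0‖ := Complex.abs_im_le_norm _
  have hresub : |‖z‖ - (z 0).re| ≤ s := by
    have := Complex.abs_re_le_norm ((‖z‖:ℂ) - z 0)
    simpa using this.trans h2
  have himsub : |(z 0).im| ≤ s := by
    have := Complex.abs_im_le_norm ((‖z‖:ℂ) - z 0)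
    simp only [Complex.sub_im, Complex.ofReal_im, zero_sub, abs_neg] at this
    exact this.trans h2
  refine ⟨(hre0.trans hb0).trans h1, himsub, fun j hj => ?_⟩
  have key : ‖z j‖^2 ≤ 2*s := by
    have h3 := habs_le j hj
    have h4 : (z 0).re^2 ≤ ‖z 0‖^2 := by
      rw [← sq_abs]
      exact pow_le_pow_left₀ (abs_nonneg _) hre0 2
    have h5 := abs_le.mp hresub
    have h6 : -‖z‖ ≤ (z 0).re := by
      have := neg_abs_le (z 0).re
      linarith
    have h7 : (‖z‖ - (z 0).re) * (‖z‖ + (z 0).re) ≤ s * (‖z‖ + (z 0).re) :=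
      mul_le_mul_of_nonneg_right h5.2 (by linarith)
    have h8 : s * (‖z‖ + (z 0).re) ≤ s * 2 :=
      mul_le_mul_of_nonneg_left (by linarith [le_abs_self (z 0).re]) hs
    nlinarith
  calc ‖z j‖ = Real.sqrt (‖z j‖^2) :=
        (Real.sqrt_sq (norm_nonneg _)).symm
    _ ≤ Real.sqrt (2*s) := Real.sqrt_le_sqrt key

lemma volume_T0 (n : ℕ) {s : ℝ} (hs : 0 ≤ s) :
    volume {z : EuclideanSpace ℂ (Fin (n+1)) |
        ‖z‖ ≤ 1 ∧ ‖(‖z‖:ℂ) - z 0‖ ≤ s}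
      ≤ ENNReal.ofReal (4 * 8^n * s^(n+1)) := by
  classical
  set sq : ℝ := Real.sqrt (2*s) with hsq
  have hsq0 : 0 ≤ sq := Real.sqrt_nonneg _
  set len : Fin (n+1) ⊕ Fin (n+1) → ℝ :=
    Sum.elim (Fin.cons 1 fun _ => sq) (Fin.cons s fun _ => sq) with hlen
  have hsub : {z : EuclideanSpace ℂ (Fin (n+1)) |
        ‖z‖ ≤ 1 ∧ ‖(‖z‖:ℂ) - z 0‖ ≤ s} ⊆
      (rONB n).repr ⁻¹' ((MeasurableEquiv.toLp 2 (_ → ℝ)).symm ⁻¹'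
        Set.pi Set.univ fun i => Set.Icc (-(len i)) (len i)) := by
    rintro z ⟨h1, h2⟩
    obtain ⟨hre, him, hoff⟩ := T0_mem_box hs h1 h2
    intro i _
    show (rONB n).repr z i ∈ Set.Icc (-(len i)) (len i)
    rcases i with j | j <;>
      rcases Fin.eq_zero_or_eq_succ j with rfl | ⟨k, rfl⟩
    · rw [rONB_repr_inl]
      simpa [hlen, Set.mem_Icc] using abs_le.mp hre
    · rw [rONB_repr_inl]
      have hcb := (Complex.abs_re_le_norm (z k.succ)).trans (hoff _ (Fin.succ_ne_zero k))
      rw [← hsq] at hcb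
      simpa [hlen, Set.mem_Icc] using abs_le.mp hcb
    · rw [rONB_repr_inr]
      simpa [hlen, Set.mem_Icc] using abs_le.mp him
    · rw [rONB_repr_inr]
      have hcb := (Complex.abs_im_le_norm (z k.succ)).trans (hoff _ (Fin.succ_ne_zero k))
      rw [← hsq] at hcb
      simpa [hlen, Set.mem_Icc] using abs_le.mp hcb
  have hpi : MeasurableSet (Set.pi Set.univ fun i => Set.Icc (-(len i)) (len i)) :=
    MeasurableSet.univ_pi fun i => measurableSet_Icc
  calc volume {z : EuclideanSpace ℂ (Fin (n+1)) |
        ‖z‖ ≤ 1 ∧ ‖(‖z‖:ℂ) - z 0‖ ≤ s}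
      ≤ volume ((rONB n).repr ⁻¹' ((MeasurableEquiv.toLp 2 (_ → ℝ)).symm ⁻¹'
        Set.pi Set.univ fun i => Set.Icc (-(len i)) (len i))) := measure_mono hsub
    _ = volume ((MeasurableEquiv.toLp 2 (_ → ℝ)).symm ⁻¹'
        Set.pi Set.univ fun i => Set.Icc (-(len i)) (len i)) :=
        (rONB n).measurePreserving_repr.measure_preimage
          (((MeasurableEquiv.toLp 2 (_ → ℝ)).symm.measurable hpi).nullMeasurableSet)
    _ = volume (Set.pi Set.univ fun i => Set.Icc (-(len i)) (len i)) :=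
        (EuclideanSpace.volume_preserving_symm_measurableEquiv_toLp _).measure_preimage
          hpi.nullMeasurableSet
    _ = ∏ i, volume (Set.Icc (-(len i)) (len i)) := volume_pi_pi _
    _ = ∏ i, ENNReal.ofReal (2 * len i) := by
        refine Finset.prod_congr rfl fun i _ => ?_
        rw [Real.volume_Icc]; norm_num [two_mul]
    _ ≤ ENNReal.ofReal (4 * 8^n * s^(n+1)) := by
        rw [Fintype.prod_sum_type]
        simp only [hlen, Sum.elim_inl, Sum.elim_inr]
        rw [Fin.prod_univ_succ, Fin.prod_univ_succ]
        simp only [Fin.cons_zero, Fin.cons_succ]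
        simp only [Finset.prod_const, Finset.card_univ, Fintype.card_fin]
        have h2sq : (0:ℝ) ≤ 2 * sq := by linarith
        rw [← ENNReal.ofReal_pow h2sq,
          ← ENNReal.ofReal_mul (by norm_num), ← ENNReal.ofReal_mul (by positivity),
          ← ENNReal.ofReal_mul (by positivity)]
        refine le_of_eq (congrArg _ ?_)
        have hkey : (2*sq)^n * (2*sq)^n = 8^n * s^n := by
          rw [← mul_pow, ← mul_pow]
          congr 1
          rw [mul_mul_mul_comm, hsq, Real.mul_self_sqrt (by linarith)]
          ring
        calc 2 * 1 * (2*sq)^n * (2 * s * (2*sq)^n)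
            = 4 * s * ((2*sq)^n * (2*sq)^n) := by ring
          _ = 4 * 8^n * s^(n+1) := by rw [hkey]; ring

end HLSaux

namespace HLSaux

open scoped Pointwise

lemma abs_oneSubPair {n : ℕ} (ξ η : Sph n) :
    ‖oneSubPair ξ η‖ = ‖1 - inner ℂ ((ξ : EuclideanSpace ℂ (Fin (n+1)))) ((η : EuclideanSpace ℂ (Fin (n+1))))‖ := by
  have h : oneSubPair ξ η = (starRingEnd ℂ)
      (1 - inner ℂ ((ξ : EuclideanSpace ℂ (Fin (n+1)))) ((η : EuclideanSpace ℂ (Fin (n+1))))) := by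
    simp only [oneSubPair, PiLp.inner_apply, map_sub, map_one, map_sum, map_mul,
      RingHomCompTriple.comp_apply, Complex.conj_conj, RCLike.inner_apply,
      starRingEnd_self_apply, RingHom.id_apply]
    congr 1; exact Finset.sum_congr rfl fun _ _ => mul_comm _ _
  rw [h, Complex.norm_conj]

lemma continuous_inner_sph {n : ℕ} (ξ : Sph n) :
    Continuous fun η : Sph n =>
      inner ℂ ((ξ : EuclideanSpace ℂ (Fin (n+1)))) ((η : EuclideanSpace ℂ (Fin (n+1)))) :=
  Continuous.inner continuous_const continuous_subtype_val

lemma measurable_cap {n : ℕ} (ξ : Sph n) (s : ℝ) :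
    MeasurableSet {η : Sph n | ‖oneSubPair ξ η‖ ≤ s} := by
  have h : {η : Sph n | ‖oneSubPair ξ η‖ ≤ s} =
      (fun η : Sph n => ‖1 - inner ℂ ((ξ : EuclideanSpace ℂ (Fin (n+1))))
        ((η : EuclideanSpace ℂ (Fin (n+1))))‖) ⁻¹' Set.Iic s := by
    ext η; simp [abs_oneSubPair]
  rw [h]
  exact ((continuous_norm.comp
    (continuous_const.sub (continuous_inner_sph ξ))).measurable) measurableSet_Iic

/-- The constant in the cap bound. -/
def capC (n : ℕ) : ℝ := (2*(n+1)) * (4 * 8^n)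

lemma capC_pos (n : ℕ) : 0 < capC n := by
  have h8 : (0:ℝ) < 8^n := by positivity
  have : (0:ℝ) < 2*(n+1) := by positivity
  rw [capC]; nlinarith

lemma cap_bound (n : ℕ) (ξ : Sph n) {s : ℝ} (hs : 0 ≤ s) :
    sphMeasure n {η : Sph n | ‖oneSubPair ξ η‖ ≤ s}
      ≤ ENNReal.ofReal (capC n * s^(n+1)) := by
  obtain ⟨cb, hcb⟩ := exists_cONB n (ξ : EuclideanSpace ℂ (Fin (n+1)))
    (mem_sphere_zero_iff_norm.mp ξ.2)
  set Vr : EuclideanSpace ℂ (Fin (n+1)) ≃ₗᵢ[ℝ] EuclideanSpace ℂ (Fin (n+1)) :=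
    ⟨cb.repr.toLinearEquiv.restrictScalars ℝ, fun x => cb.repr.norm_map x⟩ with hVr
  have hVrapp : ∀ y, Vr y = cb.repr y := fun _ => rfl
  set T0 : Set (EuclideanSpace ℂ (Fin (n+1))) :=
    {z | ‖z‖ ≤ 1 ∧ ‖(‖z‖:ℂ) - z 0‖ ≤ s} with hT0
  have hT0meas : MeasurableSet T0 := by
    have hev : Continuous fun z : EuclideanSpace ℂ (Fin (n+1)) => z 0 :=
      (continuous_apply (0 : Fin (n+1))).comp (PiLp.continuous_ofLp 2 _)
    have hc2 : Continuous fun z : EuclideanSpace ℂ (Fin (n+1)) =>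
        ‖(‖z‖:ℂ) - z 0‖ :=
      continuous_norm.comp
        ((Complex.continuous_ofReal.comp continuous_norm).sub hev)
    exact ((isClosed_le continuous_norm continuous_const).inter
      (isClosed_le hc2 continuous_const)).measurableSet
  have key : Set.Ioo (0:ℝ) 1 •
      (Subtype.val '' {η : Sph n | ‖oneSubPair ξ η‖ ≤ s}) ⊆ Vr ⁻¹' T0 := by
    rintro y hy
    rw [Set.mem_smul] at hy
    obtain ⟨r, hr, x, hx, rfl⟩ := hy
    obtain ⟨η, hη, rfl⟩ := hx
    have hnorm : ‖r • (η : EuclideanSpace ℂ (Fin (n+1)))‖ = r := by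
      rw [norm_smul, mem_sphere_zero_iff_norm.mp η.2, Real.norm_eq_abs,
        abs_of_pos hr.1, mul_one]
    have hVnorm : ‖Vr (r • (η : EuclideanSpace ℂ (Fin (n+1))))‖ = r := by
      rw [Vr.norm_map, hnorm]
    constructor
    · rw [hVnorm]; exact hr.2.le
    · have happ0 : Vr (r • (η : EuclideanSpace ℂ (Fin (n+1)))) 0
          = (r : ℂ) * inner ℂ ((ξ : EuclideanSpace ℂ (Fin (n+1))))
              ((η : EuclideanSpace ℂ (Fin (n+1)))) := by
        rw [hVrapp, ← Complex.coe_smul, _root_.map_smul]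
        have : cb.repr (η : EuclideanSpace ℂ (Fin (n+1))) 0
            = inner ℂ ((ξ : EuclideanSpace ℂ (Fin (n+1))))
                ((η : EuclideanSpace ℂ (Fin (n+1)))) := by
          rw [cb.repr_apply_apply, hcb]
        rw [← this]
        simp [Complex.real_smul]
      rw [hVnorm, happ0]
      have : (r:ℂ) - (r:ℂ) * inner ℂ ((ξ : EuclideanSpace ℂ (Fin (n+1))))
          ((η : EuclideanSpace ℂ (Fin (n+1))))
          = (r:ℂ) * (1 - inner ℂ ((ξ : EuclideanSpace ℂ (Fin (n+1))))
            ((η : EuclideanSpace ℂ (Fin (n+1))))) := by ring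
      rw [this, norm_mul]
      have h1 : ‖(r:ℂ)‖ = r := by
        rw [Complex.norm_real, Real.norm_eq_abs, abs_of_pos hr.1]
      rw [h1, ← abs_oneSubPair]
      calc r * ‖oneSubPair ξ η‖ ≤ 1 * s :=
            mul_le_mul hr.2.le hη (norm_nonneg _) zero_le_one
        _ = s := one_mul s
  calc sphMeasure n {η : Sph n | ‖oneSubPair ξ η‖ ≤ s}
      = (Module.finrank ℝ (EuclideanSpace ℂ (Fin (n+1))) : ℝ≥0∞) *
        volume (Set.Ioo (0:ℝ) 1 •
          (Subtype.val '' {η : Sph n | ‖oneSubPair ξ η‖ ≤ s})) := by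
        rw [sphMeasure, Measure.toSphere_apply' _ (measurable_cap ξ s)]
    _ ≤ (Module.finrank ℝ (EuclideanSpace ℂ (Fin (n+1))) : ℝ≥0∞) * volume (Vr ⁻¹' T0) :=
        mul_le_mul_right (measure_mono key) _
    _ = (Module.finrank ℝ (EuclideanSpace ℂ (Fin (n+1))) : ℝ≥0∞) * volume T0 := by
        rw [Vr.measurePreserving.measure_preimage hT0meas.nullMeasurableSet]
    _ ≤ (Module.finrank ℝ (EuclideanSpace ℂ (Fin (n+1))) : ℝ≥0∞) *
        ENNReal.ofReal (4 * 8^n * s^(n+1)) := mul_le_mul_right (volume_T0 n hs) _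
    _ = ENNReal.ofReal (capC n * s^(n+1)) := by
        rw [finrank_real_E]
        rw [show ((2*(n+1) : ℕ) : ℝ≥0∞) = ENNReal.ofReal ((2*(n+1) : ℕ) : ℝ) by
          rw [ENNReal.ofReal_natCast]]
        rw [← ENNReal.ofReal_mul (by positivity)]
        congr 1
        rw [capC]
        push_cast
        ring

end HLSaux

namespace HLSaux

instance sphFinite (n : ℕ) : IsFiniteMeasure (sphMeasure n) := by
  rw [sphMeasure]; infer_instance

lemma sphMeasure_univ_pos (n : ℕ) : 0 < sphMeasure n Set.univ := by
  rw [sphMeasure, Measure.toSphere_apply_univ]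
  refine ENNReal.mul_pos ?_ ?_
  · simp [finrank_real_E]
  · exact (Metric.measure_ball_pos _ _ one_pos).ne'

lemma abs_oneSubPair_symm {n : ℕ} (ξ η : Sph n) :
    ‖oneSubPair ξ η‖ = ‖oneSubPair η ξ‖ := by
  rw [abs_oneSubPair, abs_oneSubPair, ← inner_conj_symm]
  have h : 1 - (starRingEnd ℂ) (inner ℂ ((η : EuclideanSpace ℂ (Fin (n+1))))
      ((ξ : EuclideanSpace ℂ (Fin (n+1))))) = (starRingEnd ℂ)
      (1 - inner ℂ ((η : EuclideanSpace ℂ (Fin (n+1))))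
        ((ξ : EuclideanSpace ℂ (Fin (n+1))))) := by
    rw [map_sub, map_one]
  rw [h, Complex.norm_conj]

lemma kernel_setLIntegral_lower (n : ℕ) {e : ℝ} (he : 0 < e)
    {B : Set (Sph n)} (hB : MeasurableSet B) (ξ : Sph n) :
    ENNReal.ofReal ((2 * capC n) ^ (-(e/((n:ℝ)+1))) / 2) *
        (sphMeasure n B) ^ (1 + e/((n:ℝ)+1))
      ≤ ∫⁻ η in B, ENNReal.ofReal (‖oneSubPair ξ η‖ ^ e) ∂ sphMeasure n := by
  set β : ℝ := e/((n:ℝ)+1) with hβ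
  have hn1 : (0:ℝ) < (n:ℝ)+1 := by positivity
  have hβ0 : 0 < β := div_pos he hn1
  rcases eq_or_ne (sphMeasure n B) 0 with h0 | h0
  · rw [h0, ENNReal.zero_rpow_of_pos (by linarith), mul_zero]
    exact zero_le
  have hC := capC_pos n
  set t : ℝ := (sphMeasure n B).toReal with ht
  have ht0 : 0 < t := ENNReal.toReal_pos h0 (measure_ne_top _ _)
  have hBt : sphMeasure n B = ENNReal.ofReal t := (ENNReal.ofReal_toReal (measure_ne_top _ _)).symm
  set s : ℝ := (t/(2*capC n)) ^ (1/((n:ℝ)+1)) with hsdef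
  have hs0 : 0 < s := Real.rpow_pos_of_pos (by positivity) _
  have hspow : s ^ (n+1) = t/(2*capC n) := by
    rw [hsdef, ← Real.rpow_natCast ((t/(2*capC n)) ^ (1/((n:ℝ)+1))) (n+1),
      ← Real.rpow_mul (by positivity)]
    push_cast
    rw [one_div_mul_cancel hn1.ne', Real.rpow_one]
  have hcap : sphMeasure n {η : Sph n | ‖oneSubPair ξ η‖ ≤ s}
      ≤ ENNReal.ofReal (t/2) := by
    refine (cap_bound n ξ hs0.le).trans ?_
    rw [hspow]
    apply ENNReal.ofReal_le_ofReal
    rw [mul_div_assoc']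
    rw [div_le_div_iff₀ (by positivity) (by norm_num)]
    ring_nf
    nlinarith
  set cap : Set (Sph n) := {η : Sph n | ‖oneSubPair ξ η‖ ≤ s} with hcapdef
  have hdiff : ENNReal.ofReal (t/2) ≤ sphMeasure n (B \ cap) := by
    have h1 : sphMeasure n B ≤ sphMeasure n (B ∩ cap) + sphMeasure n (B \ cap) :=
      measure_le_inter_add_diff _ _ _
    have h2 : sphMeasure n (B ∩ cap) ≤ ENNReal.ofReal (t/2) :=
      (measure_mono Set.inter_subset_right).trans hcap
    have h3 : ENNReal.ofReal (t/2) + ENNReal.ofReal (t/2) = sphMeasure n B := by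
      rw [hBt, ← ENNReal.ofReal_add (by positivity) (by positivity)]
      norm_num
    have h4 : ENNReal.ofReal (t/2) + ENNReal.ofReal (t/2)
        ≤ ENNReal.ofReal (t/2) + sphMeasure n (B \ cap) := by
      rw [h3]
      calc sphMeasure n B ≤ sphMeasure n (B ∩ cap) + sphMeasure n (B \ cap) := h1
        _ ≤ ENNReal.ofReal (t/2) + sphMeasure n (B \ cap) := add_le_add_left h2 _
    exact (ENNReal.add_le_add_iff_left ENNReal.ofReal_ne_top).mp h4
  calc ENNReal.ofReal ((2 * capC n) ^ (-β) / 2) * (sphMeasure n B) ^ (1 + β)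
      ≤ ENNReal.ofReal (s^e) * ENNReal.ofReal (t/2) := by
        rw [hBt, ENNReal.ofReal_rpow_of_pos ht0,
          ← ENNReal.ofReal_mul (by positivity), ← ENNReal.ofReal_mul (by positivity)]
        apply ENNReal.ofReal_le_ofReal
        apply le_of_eq
        have hse : s^e = t^β * (2*capC n)^(-β) := by
          rw [hsdef, ← Real.rpow_mul (by positivity), one_div_mul_eq_div,
            ← hβ, Real.div_rpow ht0.le (by positivity), Real.rpow_neg (by positivity),
            div_eq_mul_inv]
        rw [hse, Real.rpow_add ht0, Real.rpow_one]
        ring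
    _ ≤ ENNReal.ofReal (s^e) * sphMeasure n (B \ cap) := mul_le_mul_right hdiff _
    _ = ∫⁻ _ in B \ cap, ENNReal.ofReal (s^e) ∂ sphMeasure n := (setLIntegral_const _ _).symm
    _ ≤ ∫⁻ η in B \ cap, ENNReal.ofReal (‖oneSubPair ξ η‖ ^ e) ∂ sphMeasure n := by
        refine setLIntegral_mono' (hB.diff (measurable_cap ξ s)) fun η hη => ?_
        apply ENNReal.ofReal_le_ofReal
        have hgt : s ≤ ‖oneSubPair ξ η‖ := le_of_not_ge hη.2
        exact Real.rpow_le_rpow hs0.le hgt he.le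
    _ ≤ ∫⁻ η in B, ENNReal.ofReal (‖oneSubPair ξ η‖ ^ e) ∂ sphMeasure n :=
        lintegral_mono_set Set.diff_subset

end HLSaux

namespace HLSaux

lemma pow_term_eq {p q T er : ℝ} (hT : 0 < T) (he : 0 < er) (k : ℕ) :
    ((2:ℝ)^(k+1) * T)^p * (er / ((2:ℝ)^k * T))^q
      = (2:ℝ)^p * T^(p-q) * er^q * ((2:ℝ)^(p-q))^k := by
  have h2k : (0:ℝ) < 2^k := by positivity
  have h2k1 : (0:ℝ) < 2^(k+1) := by positivity
  rw [Real.mul_rpow h2k1.le hT.le, Real.div_rpow he.le (by positivity),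
    Real.mul_rpow h2k.le hT.le,
    ← Real.rpow_natCast (2:ℝ) (k+1), ← Real.rpow_natCast (2:ℝ) k,
    ← Real.rpow_natCast ((2:ℝ)^(p-q)) k, ← Real.rpow_mul (by norm_num : (0:ℝ) ≤ 2),
    ← Real.rpow_mul (by norm_num : (0:ℝ) ≤ 2), ← Real.rpow_mul (by norm_num : (0:ℝ) ≤ 2)]
  simp only [Real.rpow_def_of_pos hT, Real.rpow_def_of_pos he,
    Real.rpow_def_of_pos (by norm_num : (0:ℝ) < 2), div_eq_mul_inv, mul_inv,
    ← Real.exp_neg, ← Real.exp_add]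
  rw [Real.exp_eq_exp]
  push_cast
  ring

/-- The constant in the level-selection lemma. -/
def levC (p q m : ℝ) : ℝ :=
  (2 * (m ^ (1 - p/q) * (1 + (2:ℝ)^p / (1 - (2:ℝ)^(p-q))))) ^ (-(1/p))

lemma levC_pos {p q m : ℝ} (hp : 0 < p) (hpq : p < q) (hm : 0 < m) : 0 < levC p q m := by
  have hr1 : (2:ℝ)^(p-q) < 1 :=
    Real.rpow_lt_one_of_one_lt_of_neg one_lt_two (by linarith)
  have h1 : (0:ℝ) < m ^ (1 - p/q) := Real.rpow_pos_of_pos hm _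
  have h2 : (0:ℝ) < (2:ℝ)^p := Real.rpow_pos_of_pos two_pos _
  have h3 : (0:ℝ) < 1 + (2:ℝ)^p / (1 - (2:ℝ)^(p-q)) := by
    linarith [div_pos h2 (show (0:ℝ) < 1 - (2:ℝ)^(p-q) by linarith)]
  exact Real.rpow_pos_of_pos (by nlinarith [mul_pos h1 h3]) _

lemma exists_level {α : Type*} [MeasurableSpace α] (μ : Measure α) [IsFiniteMeasure μ]
    (hμ : μ Set.univ ≠ 0) {p q : ℝ} (hp : 0 < p) (hpq : p < q)
    {f : α → ℝ} (hf : Measurable f)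
    (hN0 : ∫⁻ x, ENNReal.ofReal (f x) ^ p ∂μ ≠ 0)
    (hNtop : ∫⁻ x, ENNReal.ofReal (f x) ^ p ∂μ ≠ ⊤) :
    ∃ t : ℝ, 0 < t ∧
      ENNReal.ofReal (levC p q (μ Set.univ).toReal) *
          (∫⁻ x, ENNReal.ofReal (f x) ^ p ∂μ) ^ (1/p)
        ≤ ENNReal.ofReal t * (μ {x | t < f x}) ^ (1/q) := by
  have hq : 0 < q := hp.trans hpq
  set N : ℝ≥0∞ := ∫⁻ x, ENNReal.ofReal (f x) ^ p ∂μ with hNdef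
  set m : ℝ := (μ Set.univ).toReal with hmdef
  have hm0 : 0 < m := ENNReal.toReal_pos hμ (measure_ne_top μ _)
  have hμm : μ Set.univ = ENNReal.ofReal m := (ENNReal.ofReal_toReal (measure_ne_top μ _)).symm
  set Nt : ℝ := N.toReal with hNtdef
  have hNt0 : 0 < Nt := ENNReal.toReal_pos hN0 hNtop
  have hNofReal : N = ENNReal.ofReal Nt := (ENNReal.ofReal_toReal hNtop).symm
  set r : ℝ := (2:ℝ)^(p-q) with hrdef
  have hr0 : 0 < r := Real.rpow_pos_of_pos two_pos _
  have hr1 : r < 1 := Real.rpow_lt_one_of_one_lt_of_neg one_lt_two (by linarith)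
  set K : ℝ := m ^ (1 - p/q) * (1 + (2:ℝ)^p / (1 - r)) with hKdef
  have hK0 : 0 < K := by
    have h1 : (0:ℝ) < m ^ (1 - p/q) := Real.rpow_pos_of_pos hm0 _
    have h2 : (0:ℝ) < (2:ℝ)^p := Real.rpow_pos_of_pos two_pos _
    have h3 : (0:ℝ) < 1 + (2:ℝ)^p / (1 - r) := by
      linarith [div_pos h2 (show (0:ℝ) < 1 - r by linarith)]
    exact mul_pos h1 h3
  have hlev : levC p q m = (2*K) ^ (-(1/p)) := rfl
  set e0 : ℝ := (2*K) ^ (-(1/p)) with he0def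
  have he00 : 0 < e0 := Real.rpow_pos_of_pos (by linarith) _
  set er : ℝ := e0 * Nt ^ (1/p) with herdef
  have her0 : 0 < er := mul_pos he00 (Real.rpow_pos_of_pos hNt0 _)
  have hεN : ENNReal.ofReal (levC p q m) * N ^ (1/p) = ENNReal.ofReal er := by
    rw [hlev, hNofReal, ENNReal.ofReal_rpow_of_pos hNt0, ← ENNReal.ofReal_mul he00.le]
  by_contra hcon
  push_neg at hcon
  have hmu : ∀ t : ℝ, 0 < t → μ {x | t < f x} ≤ ENNReal.ofReal ((er/t)^q) := by
    intro t ht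
    have h1 : ENNReal.ofReal t * (μ {x | t < f x}) ^ (1/q) ≤ ENNReal.ofReal er := by
      rw [← hεN]; exact (hcon t ht).le
    have h2 : (μ {x | t < f x}) ^ (1/q) ≤ ENNReal.ofReal (er/t) := by
      rw [ENNReal.ofReal_div_of_pos ht]
      refine (ENNReal.le_div_iff_mul_le (Or.inl ?_) (Or.inl ENNReal.ofReal_ne_top)).mpr ?_
      · exact (ENNReal.ofReal_pos.mpr ht).ne'
      · rwa [mul_comm]
    have h3 := ENNReal.rpow_le_rpow h2 hq.le
    rwa [← ENNReal.rpow_mul, one_div_mul_cancel hq.ne', ENNReal.rpow_one,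
      ENNReal.ofReal_rpow_of_pos (div_pos her0 ht)] at h3
  set T : ℝ := er * m ^ (-(1/q)) with hTdef
  have hT0 : 0 < T := mul_pos her0 (Real.rpow_pos_of_pos hm0 _)
  have hpoint : ∀ x, ENNReal.ofReal (f x) ^ p ≤ ENNReal.ofReal (T^p)
      + ∑' k : ℕ, ENNReal.ofReal (((2:ℝ)^(k+1) * T)^p) *
          Set.indicator {y | (2:ℝ)^k * T < f y} (fun _ => (1:ℝ≥0∞)) x := by
    intro x
    by_cases hfx : f x ≤ T
    · refine le_trans ?_ (self_le_add_right _ _)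
      rw [← ENNReal.ofReal_rpow_of_pos hT0]
      exact ENNReal.rpow_le_rpow (ENNReal.ofReal_le_ofReal hfx) hp.le
    push_neg at hfx
    have hex : ∃ k : ℕ, f x ≤ (2:ℝ)^(k+1) * T := by
      obtain ⟨k, hk⟩ := pow_unbounded_of_one_lt (f x / T) one_lt_two
      refine ⟨k, ?_⟩
      rw [div_lt_iff₀ hT0] at hk
      have h2 : (2:ℝ)^k * T ≤ (2:ℝ)^(k+1) * T := by
        have : (2:ℝ)^k ≤ 2^(k+1) := by
          apply pow_le_pow_right₀ (by norm_num); omega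
        nlinarith
      linarith
    set k0 := Nat.find hex with hk0def
    have hk0 : f x ≤ (2:ℝ)^(k0+1) * T := Nat.find_spec hex
    have hlow : (2:ℝ)^k0 * T < f x := by
      rcases Nat.eq_zero_or_pos k0 with h | h
      · rw [h]; simpa using hfx
      · have := Nat.find_min hex (m := k0 - 1) (by omega)
        push_neg at this
        have hco : k0 - 1 + 1 = k0 := by omega
        rwa [hco] at this
    have hone : Set.indicator {y | (2:ℝ)^k0 * T < f y} (fun _ => (1:ℝ≥0∞)) x = 1 :=
      Set.indicator_of_mem (show x ∈ {y | (2:ℝ)^k0 * T < f y} from hlow) _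
    have hterm : ENNReal.ofReal (f x) ^ p ≤ ENNReal.ofReal (((2:ℝ)^(k0+1) * T)^p) *
        Set.indicator {y | (2:ℝ)^k0 * T < f y} (fun _ => (1:ℝ≥0∞)) x := by
      rw [hone, mul_one, ← ENNReal.ofReal_rpow_of_pos (by positivity)]
      exact ENNReal.rpow_le_rpow (ENNReal.ofReal_le_ofReal hk0) hp.le
    refine le_trans (hterm.trans (ENNReal.le_tsum k0)) (self_le_add_left _ _)
  have hsets : ∀ k : ℕ, MeasurableSet {y | (2:ℝ)^k * T < f y} :=
    fun k => measurableSet_lt measurable_const hf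
  have hint : N ≤ ENNReal.ofReal (T^p) * μ Set.univ
      + ∑' k : ℕ, ENNReal.ofReal (((2:ℝ)^(k+1) * T)^p) * μ {y | (2:ℝ)^k * T < f y} := by
    calc N ≤ ∫⁻ x, (ENNReal.ofReal (T^p)
        + ∑' k : ℕ, ENNReal.ofReal (((2:ℝ)^(k+1) * T)^p) *
          Set.indicator {y | (2:ℝ)^k * T < f y} (fun _ => (1:ℝ≥0∞)) x) ∂μ :=
          lintegral_mono hpoint
      _ = ENNReal.ofReal (T^p) * μ Set.univ
          + ∑' k : ℕ, ENNReal.ofReal (((2:ℝ)^(k+1) * T)^p) * μ {y | (2:ℝ)^k * T < f y} := by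
          rw [lintegral_add_left measurable_const, lintegral_const,
            lintegral_tsum fun k => ((measurable_const.indicator (hsets k)).const_mul _).aemeasurable]
          congr 1
          refine tsum_congr fun k => ?_
          rw [lintegral_const_mul' _ _ ENNReal.ofReal_ne_top]
          congr 1
          have : (fun _ : α => (1:ℝ≥0∞)) = (1 : α → ℝ≥0∞) := rfl
          rw [this, lintegral_indicator_one (hsets k)]
  have hterm2 : ∀ k : ℕ, ENNReal.ofReal (((2:ℝ)^(k+1) * T)^p) * μ {y | (2:ℝ)^k * T < f y}
      ≤ ENNReal.ofReal ((2:ℝ)^p * T^(p-q) * er^q) * ENNReal.ofReal r ^ k := by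
    intro k
    have h2k : (0:ℝ) < 2^k * T := by positivity
    calc ENNReal.ofReal (((2:ℝ)^(k+1) * T)^p) * μ {y | (2:ℝ)^k * T < f y}
        ≤ ENNReal.ofReal (((2:ℝ)^(k+1) * T)^p) * ENNReal.ofReal ((er/((2:ℝ)^k * T))^q) :=
          mul_le_mul_right (hmu _ h2k) _
      _ = ENNReal.ofReal ((2:ℝ)^p * T^(p-q) * er^q) * ENNReal.ofReal r ^ k := by
          rw [← ENNReal.ofReal_mul (by positivity), pow_term_eq hT0 her0,
            ENNReal.ofReal_mul (by positivity), ENNReal.ofReal_pow hr0.le]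
  have hgeom : ∑' k : ℕ, ENNReal.ofReal ((2:ℝ)^p * T^(p-q) * er^q) * ENNReal.ofReal r ^ k
      = ENNReal.ofReal ((2:ℝ)^p * T^(p-q) * er^q) * ENNReal.ofReal ((1-r)⁻¹) := by
    rw [ENNReal.tsum_mul_left, ENNReal.tsum_geometric]
    congr 1
    rw [← ENNReal.ofReal_one, ← ENNReal.ofReal_sub _ hr0.le]
    exact (ENNReal.ofReal_inv_of_pos (show (0:ℝ) < 1 - r by linarith)).symm
  have hreal : T^p * m + (2:ℝ)^p * T^(p-q) * er^q * (1-r)⁻¹ = Nt / 2 := by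
    have ha : T^p = er^p * m^(-(p/q)) := by
      rw [hTdef, Real.mul_rpow her0.le (Real.rpow_pos_of_pos hm0 _).le,
        ← Real.rpow_mul hm0.le]
      congr 2
      ring
    have hb : T^(p-q) = er^(p-q) * m^(1-p/q) := by
      rw [hTdef, Real.mul_rpow her0.le (Real.rpow_pos_of_pos hm0 _).le,
        ← Real.rpow_mul hm0.le]
      congr 2
      field_simp
      try ring
    have hc : er^(p-q) * er^q = er^p := by
      rw [← Real.rpow_add her0]; congr 1; ring
    have hd : m^(-(p/q)) * m = m^(1-p/q) := by
      nth_rewrite 2 [show m = m^(1:ℝ) from (Real.rpow_one m).symm]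
      rw [← Real.rpow_add hm0]; congr 1; ring
    have he : er^p = (2*K)⁻¹ * Nt := by
      rw [herdef, Real.mul_rpow he00.le (Real.rpow_pos_of_pos hNt0 _).le, he0def,
        ← Real.rpow_mul (by positivity), ← Real.rpow_mul hNt0.le]
      rw [show -(1/p) * p = -1 by field_simp, show 1/p * p = 1 by field_simp,
        Real.rpow_neg_one, Real.rpow_one]
    calc T^p * m + (2:ℝ)^p * T^(p-q) * er^q * (1-r)⁻¹
        = er^p * (m^(-(p/q)) * m) + (2:ℝ)^p * (er^(p-q) * er^q) * m^(1-p/q) * (1-r)⁻¹ := by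
          rw [ha, hb]; ring
      _ = er^p * K := by
          rw [hc, hd, hKdef]
          field_simp
      _ = Nt / 2 := by
          rw [he]
          field_simp
          try ring
  have hfinal : N ≤ ENNReal.ofReal (Nt/2) := by
    calc N ≤ ENNReal.ofReal (T^p) * μ Set.univ
        + ∑' k : ℕ, ENNReal.ofReal (((2:ℝ)^(k+1) * T)^p) * μ {y | (2:ℝ)^k * T < f y} := hint
      _ ≤ ENNReal.ofReal (T^p) * ENNReal.ofReal m
          + ENNReal.ofReal ((2:ℝ)^p * T^(p-q) * er^q) * ENNReal.ofReal ((1-r)⁻¹) := by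
          rw [← hgeom, ← hμm]
          exact add_le_add_right (ENNReal.tsum_le_tsum hterm2) _
      _ = ENNReal.ofReal (T^p * m + (2:ℝ)^p * T^(p-q) * er^q * (1-r)⁻¹) := by
          have w1 : (0:ℝ) ≤ T^p := Real.rpow_nonneg hT0.le _
          have w2 : (0:ℝ) ≤ (2:ℝ)^p * T^(p-q) * er^q :=
            mul_nonneg (mul_nonneg (Real.rpow_nonneg (by norm_num) _)
              (Real.rpow_nonneg hT0.le _)) (Real.rpow_nonneg her0.le _)
          have w3 : (0:ℝ) ≤ (1-r)⁻¹ := inv_nonneg.mpr (by linarith)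
          rw [← ENNReal.ofReal_mul w1, ← ENNReal.ofReal_mul w2,
            ← ENNReal.ofReal_add (mul_nonneg w1 hm0.le) (mul_nonneg w2 w3)]
      _ = ENNReal.ofReal (Nt/2) := by rw [hreal]
  have : N < N := by
    calc N ≤ ENNReal.ofReal (Nt/2) := hfinal
      _ < ENNReal.ofReal Nt := by
          apply ENNReal.ofReal_lt_ofReal_iff_of_nonneg (by positivity) |>.mpr
          linarith
      _ = N := hNofReal.symm
  exact absurd this (lt_irrefl N)

end HLSaux

open HLSaux in
theorem HLS_main_aux (n : ℕ) (hn : 1 ≤ n) (Q α pα p : ℝ)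
    (hQ : Q = 2 * n + 2) (hα : Q < α) (hpα : pα = 2 * Q / (Q + α))
    (hp0 : 0 < p) (hpp : p < pα) :
    ∃ C : ℝ, 0 < C ∧ ∀ f g : Sph n → ℝ, Measurable f → Measurable g →
      (∀ ξ, 0 ≤ f ξ) → (∀ ξ, 0 ≤ g ξ) → lpS n p f < ⊤ → lpS n p g < ⊤ →
      ENNReal.ofReal C * lpS n p f * lpS n p g ≤ dblInt n ((α - Q) / 2) f g := by
  classical
  set e : ℝ := (α - Q) / 2 with hedef
  have hQpos : (0:ℝ) < Q := by rw [hQ]; positivity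
  have he : 0 < e := by rw [hedef]; linarith
  have hQα : (0:ℝ) < Q + α := by linarith
  have hpα0 : 0 < pα := by rw [hpα]; positivity
  have hn1Q : ((n:ℝ) + 1) = Q / 2 := by rw [hQ]; push_cast; ring
  set β : ℝ := e / ((n:ℝ) + 1) with hβdef
  have hβQ : β = (α - Q) / Q := by
    rw [hβdef, hedef, hn1Q]
    field_simp
  have hexp : (1/pα) * 2 = 2 + β := by
    rw [hβQ, hpα]
    field_simp
    ring
  set μ := sphMeasure n with hμdef
  have hμ0 : μ Set.univ ≠ 0 := (sphMeasure_univ_pos n).ne'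
  set m : ℝ := (μ Set.univ).toReal with hmdef
  have hm0 : 0 < m := ENNReal.toReal_pos hμ0 (measure_ne_top μ _)
  set c3 : ℝ := (2 * capC n) ^ (-β) / 2 with hc3def
  have hc30 : 0 < c3 := by
    have := Real.rpow_pos_of_pos (by linarith [capC_pos n] : (0:ℝ) < 2 * capC n) (-β)
    positivity
  set ε0 : ℝ := levC p pα m with hε0def
  have hε00 : 0 < ε0 := levC_pos hp0 hpp hm0
  refine ⟨c3 * (ε0 * ε0), by positivity, ?_⟩
  intro f g hfm hgm hf0 hg0 hlf hlg
  have h1p : (0:ℝ) < 1/p := by positivity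
  -- degenerate cases
  rcases eq_or_ne (∫⁻ x, ENNReal.ofReal (f x) ^ p ∂μ) 0 with hNf0 | hNf0
  · have : lpS n p f = 0 := by
      rw [lpS, ← hμdef, hNf0, ENNReal.zero_rpow_of_pos h1p]
    rw [this, mul_zero, zero_mul]
    exact zero_le
  rcases eq_or_ne (∫⁻ x, ENNReal.ofReal (g x) ^ p ∂μ) 0 with hNg0 | hNg0
  · have : lpS n p g = 0 := by
      rw [lpS, ← hμdef, hNg0, ENNReal.zero_rpow_of_pos h1p]
    rw [this, mul_zero]
    exact zero_le
  have hNftop : (∫⁻ x, ENNReal.ofReal (f x) ^ p ∂μ) ≠ ⊤ := by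
    intro h
    rw [lpS, ← hμdef, h, ENNReal.top_rpow_of_pos h1p] at hlf
    exact absurd hlf (lt_irrefl ⊤)
  have hNgtop : (∫⁻ x, ENNReal.ofReal (g x) ^ p ∂μ) ≠ ⊤ := by
    intro h
    rw [lpS, ← hμdef, h, ENNReal.top_rpow_of_pos h1p] at hlg
    exact absurd hlg (lt_irrefl ⊤)
  obtain ⟨tf, htf0, hlevf⟩ := exists_level μ hμ0 hp0 hpp hfm hNf0 hNftop
  obtain ⟨tg, htg0, hlevg⟩ := exists_level μ hμ0 hp0 hpp hgm hNg0 hNgtop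
  set A : Set (Sph n) := {x | tf < f x} with hAdef
  set B : Set (Sph n) := {x | tg < g x} with hBdef
  have hAm : MeasurableSet A := measurableSet_lt measurable_const hfm
  have hBm : MeasurableSet B := measurableSet_lt measurable_const hgm
  have hlpf : ENNReal.ofReal ε0 * lpS n p f ≤ ENNReal.ofReal tf * (μ A) ^ (1/pα) := by
    rw [lpS, ← hμdef]; exact hlevf
  have hlpg : ENNReal.ofReal ε0 * lpS n p g ≤ ENNReal.ofReal tg * (μ B) ^ (1/pα) := by
    rw [lpS, ← hμdef]; exact hlevg
  have hlpfpos : 0 < ENNReal.ofReal ε0 * lpS n p f := by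
    refine ENNReal.mul_pos (ENNReal.ofReal_pos.mpr hε00).ne' ?_
    rw [lpS, ← hμdef]
    exact (ENNReal.rpow_pos (pos_iff_ne_zero.mpr hNf0) hNftop).ne'
  have hlpgpos : 0 < ENNReal.ofReal ε0 * lpS n p g := by
    refine ENNReal.mul_pos (ENNReal.ofReal_pos.mpr hε00).ne' ?_
    rw [lpS, ← hμdef]
    exact (ENNReal.rpow_pos (pos_iff_ne_zero.mpr hNg0) hNgtop).ne'
  have hμA0 : μ A ≠ 0 := by
    intro h0
    rw [h0, ENNReal.zero_rpow_of_pos (by positivity), mul_zero] at hlpf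
    exact absurd (le_antisymm hlpf (zero_le)) hlpfpos.ne'
  have hμB0 : μ B ≠ 0 := by
    intro h0
    rw [h0, ENNReal.zero_rpow_of_pos (by positivity), mul_zero] at hlpg
    exact absurd (le_antisymm hlpg (zero_le)) hlpgpos.ne'
  -- the double kernel integral over A × B
  set D : ℝ≥0∞ := ∫⁻ ξ in A, ∫⁻ η in B,
      ENNReal.ofReal (‖oneSubPair ξ η‖ ^ e) ∂μ ∂μ with hDdef
  have hD1 : ENNReal.ofReal c3 * ((μ B) ^ (1 + β) * μ A) ≤ D := by
    have hker : ∀ ξ : Sph n, ENNReal.ofReal c3 * (μ B) ^ (1 + β)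
        ≤ ∫⁻ η in B, ENNReal.ofReal (‖oneSubPair ξ η‖ ^ e) ∂μ := by
      intro ξ
      exact kernel_setLIntegral_lower n he hBm ξ
    calc ENNReal.ofReal c3 * ((μ B) ^ (1 + β) * μ A)
        = ∫⁻ _ in A, ENNReal.ofReal c3 * (μ B) ^ (1 + β) ∂μ := by
          rw [setLIntegral_const, mul_assoc]
      _ ≤ D := lintegral_mono fun ξ => hker ξ
  have hKmeas : Measurable (Function.uncurry fun ξ η : Sph n =>
      ENNReal.ofReal (‖oneSubPair ξ η‖ ^ e)) := by
    have hcont : Continuous fun P : Sph n × Sph n =>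
        ‖1 - inner ℂ ((P.1 : EuclideanSpace ℂ (Fin (n+1))))
          ((P.2 : EuclideanSpace ℂ (Fin (n+1))))‖ :=
      continuous_norm.comp (continuous_const.sub
        (Continuous.inner (continuous_subtype_val.comp continuous_fst)
          (continuous_subtype_val.comp continuous_snd)))
    have heq : (Function.uncurry fun ξ η : Sph n =>
        ENNReal.ofReal (‖oneSubPair ξ η‖ ^ e))
        = fun P : Sph n × Sph n => ENNReal.ofReal
          ((‖1 - inner ℂ ((P.1 : EuclideanSpace ℂ (Fin (n+1))))
            ((P.2 : EuclideanSpace ℂ (Fin (n+1))))‖) ^ e) := by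
      funext P
      rw [Function.uncurry]
      rw [abs_oneSubPair]
    rw [heq]
    exact ENNReal.measurable_ofReal.comp
      ((Real.continuous_rpow_const he.le).comp hcont).measurable
  have hswap : D = ∫⁻ η in B, ∫⁻ ξ in A,
      ENNReal.ofReal (‖oneSubPair ξ η‖ ^ e) ∂μ ∂μ := by
    rw [hDdef]
    exact lintegral_lintegral_swap hKmeas.aemeasurable
  have hD2 : ENNReal.ofReal c3 * ((μ A) ^ (1 + β) * μ B) ≤ D := by
    rw [hswap]
    have hker : ∀ η : Sph n, ENNReal.ofReal c3 * (μ A) ^ (1 + β)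
        ≤ ∫⁻ ξ in A, ENNReal.ofReal (‖oneSubPair ξ η‖ ^ e) ∂μ := by
      intro η
      have := kernel_setLIntegral_lower n he hAm η
      refine this.trans (le_of_eq ?_)
      refine lintegral_congr fun ξ => ?_
      rw [abs_oneSubPair_symm]
    calc ENNReal.ofReal c3 * ((μ A) ^ (1 + β) * μ B)
        = ∫⁻ _ in B, ENNReal.ofReal c3 * (μ A) ^ (1 + β) ∂μ := by
          rw [setLIntegral_const, mul_assoc]
      _ ≤ _ := lintegral_mono fun η => hker η
  -- geometric mean
  have hDge : ENNReal.ofReal c3 * ((μ A) ^ (1/pα) * (μ B) ^ (1/pα)) ≤ D := by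
    have hsq : (ENNReal.ofReal c3 * ((μ A) ^ (1/pα) * (μ B) ^ (1/pα))) ^ (2:ℝ)
        ≤ D ^ (2:ℝ) := by
      have h2 : ∀ x : ℝ≥0∞, x ^ (2:ℝ) = x * x := by
        intro x
        rw [show (2:ℝ) = ((2:ℕ):ℝ) by norm_num, ENNReal.rpow_natCast, sq]
      rw [h2, h2]
      have hA2 : ((μ A) ^ (1/pα) * (μ B) ^ (1/pα)) * ((μ A) ^ (1/pα) * (μ B) ^ (1/pα))
          = ((μ B) ^ (1 + β) * μ A) * ((μ A) ^ (1 + β) * μ B) := by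
        have hA : (μ A) ^ (1/pα) * (μ A) ^ (1/pα) = μ A * (μ A) ^ (1 + β) := by
          rw [← ENNReal.rpow_add _ _ hμA0 (measure_ne_top μ A)]
          have hee : (1/pα) + (1/pα) = 1 + (1+β) := by
            have h' : (1/pα) * 2 = 2 + β := hexp
            linarith
          rw [hee, ENNReal.rpow_add _ _ hμA0 (measure_ne_top μ A), ENNReal.rpow_one]
        have hB : (μ B) ^ (1/pα) * (μ B) ^ (1/pα) = μ B * (μ B) ^ (1 + β) := by
          rw [← ENNReal.rpow_add _ _ hμB0 (measure_ne_top μ B)]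
          have hee : (1/pα) + (1/pα) = 1 + (1+β) := by
            have h' : (1/pα) * 2 = 2 + β := hexp
            linarith
          rw [hee, ENNReal.rpow_add _ _ hμB0 (measure_ne_top μ B), ENNReal.rpow_one]
        calc ((μ A) ^ (1/pα) * (μ B) ^ (1/pα)) * ((μ A) ^ (1/pα) * (μ B) ^ (1/pα))
            = ((μ A) ^ (1/pα) * (μ A) ^ (1/pα)) * ((μ B) ^ (1/pα) * (μ B) ^ (1/pα)) := by
              ring
          _ = (μ A * (μ A) ^ (1 + β)) * (μ B * (μ B) ^ (1 + β)) := by rw [hA, hB]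
          _ = ((μ B) ^ (1 + β) * μ A) * ((μ A) ^ (1 + β) * μ B) := by ring
      calc ENNReal.ofReal c3 * ((μ A) ^ (1/pα) * (μ B) ^ (1/pα))
            * (ENNReal.ofReal c3 * ((μ A) ^ (1/pα) * (μ B) ^ (1/pα)))
          = (ENNReal.ofReal c3 * ((μ B) ^ (1 + β) * μ A))
            * (ENNReal.ofReal c3 * ((μ A) ^ (1 + β) * μ B)) := by
            rw [mul_mul_mul_comm, hA2, mul_mul_mul_comm]
        _ ≤ D * D := mul_le_mul' hD1 hD2
    have := ENNReal.rpow_le_rpow hsq (by norm_num : (0:ℝ) ≤ 1/2)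
    rwa [← ENNReal.rpow_mul, ← ENNReal.rpow_mul, show (2:ℝ) * (1/2) = 1 by norm_num,
      ENNReal.rpow_one, ENNReal.rpow_one] at this
  -- lower bound dblInt by the restricted integral
  have hdbl : ENNReal.ofReal tf * ENNReal.ofReal tg * D ≤ dblInt n e f g := by
    rw [dblInt, ← hμdef]
    calc ENNReal.ofReal tf * ENNReal.ofReal tg * D
        = ∫⁻ ξ in A, ∫⁻ η in B, ENNReal.ofReal tf * ENNReal.ofReal tg *
            ENNReal.ofReal (‖oneSubPair ξ η‖ ^ e) ∂μ ∂μ := by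
          rw [hDdef]
          rw [← lintegral_const_mul' _ _
            (ENNReal.mul_ne_top ENNReal.ofReal_ne_top ENNReal.ofReal_ne_top)]
          refine lintegral_congr fun ξ => ?_
          rw [← lintegral_const_mul' _ _
            (ENNReal.mul_ne_top ENNReal.ofReal_ne_top ENNReal.ofReal_ne_top)]
      _ ≤ ∫⁻ ξ in A, ∫⁻ η in B, ENNReal.ofReal (f ξ) * ENNReal.ofReal (g η) *
            ENNReal.ofReal (‖oneSubPair ξ η‖ ^ e) ∂μ ∂μ := by
          refine setLIntegral_mono' hAm fun ξ hξ => ?_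
          refine setLIntegral_mono' hBm fun η hη => ?_
          refine mul_le_mul' (mul_le_mul' ?_ ?_) le_rfl
          · exact ENNReal.ofReal_le_ofReal (le_of_lt hξ)
          · exact ENNReal.ofReal_le_ofReal (le_of_lt hη)
      _ ≤ ∫⁻ ξ in A, ∫⁻ η, ENNReal.ofReal (f ξ) * ENNReal.ofReal (g η) *
            ENNReal.ofReal (‖oneSubPair ξ η‖ ^ e) ∂μ ∂μ :=
          lintegral_mono fun ξ => setLIntegral_le_lintegral _ _
      _ ≤ ∫⁻ ξ, ∫⁻ η, ENNReal.ofReal (f ξ) * ENNReal.ofReal (g η) *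
            ENNReal.ofReal (‖oneSubPair ξ η‖ ^ e) ∂μ ∂μ :=
          setLIntegral_le_lintegral _ _
  -- final chain
  calc ENNReal.ofReal (c3 * (ε0 * ε0)) * lpS n p f * lpS n p g
      = ENNReal.ofReal c3 * ((ENNReal.ofReal ε0 * lpS n p f)
          * (ENNReal.ofReal ε0 * lpS n p g)) := by
        rw [ENNReal.ofReal_mul hc30.le, ENNReal.ofReal_mul hε00.le]
        ring
    _ ≤ ENNReal.ofReal c3 * ((ENNReal.ofReal tf * (μ A) ^ (1/pα))
          * (ENNReal.ofReal tg * (μ B) ^ (1/pα))) :=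
        mul_le_mul' le_rfl (mul_le_mul' hlpf hlpg)
    _ = ENNReal.ofReal tf * ENNReal.ofReal tg *
          (ENNReal.ofReal c3 * ((μ A) ^ (1/pα) * (μ B) ^ (1/pα))) := by ring
    _ ≤ ENNReal.ofReal tf * ENNReal.ofReal tg * D := mul_le_mul' le_rfl hDge
    _ ≤ dblInt n e f g := hdbl

/-- Subcritical reversed HLS inequality on the CR sphere. -/
theorem subcritical_reversed_HLS_sphere (n : ℕ) (hn : 1 ≤ n) (Q α pα p : ℝ)
    (hQ : Q = 2 * n + 2) (hα : Q < α) (hpα : pα = 2 * Q / (Q + α))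
    (hp0 : 0 < p) (hpp : p < pα) :
    ∃ C : ℝ, 0 < C ∧ ∀ f g : Sph n → ℝ, Measurable f → Measurable g →
      (∀ ξ, 0 ≤ f ξ) → (∀ ξ, 0 ≤ g ξ) → lpS n p f < ⊤ → lpS n p g < ⊤ →
      ENNReal.ofReal C * lpS n p f * lpS n p g ≤ dblInt n ((α - Q) / 2) f g :=
  HLS_main_aux n hn Q α pα p hQ hα hpα hp0 hpp
end
end

section
/- Let n ≥ 1, Q = 2n+2, α > Q, p_α = 2Q/(Q+α). For 0 < p ≤ p_α let N_{Q,α,p} denote the infimum of ∫_{𝕊^{2n+1}}∫_{𝕊^{2n+1}} f(ξ) g(η) |1 − ξ·η̄|^{(α−Q)/2} dξ dη over all nonnegative f, g ∈ L^p(𝕊^{2n+1}) with ‖f‖_{L^p} = ‖g‖_{L^p} = 1, and write N_{Q,α} = N_{Q,α,p_α}. Then N_{Q,α,p} → N_{Q,α} as p → p_α from below. -/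
open MeasureTheory ENNReal Filter

noncomputable section

/-- The constant `N_{Q,α,p}`: infimum of the double integral with kernel exponent `e`
over nonnegative functions with unit `L^p` norm. -/
def NQap (n : ℕ) (e p : ℝ) : ℝ≥0∞ :=
  sInf { I : ℝ≥0∞ | ∃ f g : Sph n → ℝ, Measurable f ∧ Measurable g ∧
    (∀ ξ, 0 ≤ f ξ) ∧ (∀ ξ, 0 ≤ g ξ) ∧ lpS n p f = 1 ∧ lpS n p g = 1 ∧
    I = dblInt n e f g }

/-! ### Auxiliary lemmas -/

lemma sphMeasure_univ_ne_zero (n : ℕ) : sphMeasure n Set.univ ≠ 0 := by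
  rw [sphMeasure, Measure.toSphere_apply_univ]
  have h1 : (0:ℝ≥0∞) < Module.finrank ℝ (EuclideanSpace ℂ (Fin (n+1))) := by
    have : 0 < Module.finrank ℝ (EuclideanSpace ℂ (Fin (n+1))) := Module.finrank_pos
    exact_mod_cast this
  have h2 := Metric.measure_ball_pos (volume : Measure (EuclideanSpace ℂ (Fin (n+1)))) 0 one_pos
  exact (ENNReal.mul_pos h1.ne' h2.ne').ne'

lemma sphMeasure_univ_ne_top (n : ℕ) : sphMeasure n Set.univ ≠ ⊤ := by
  rw [sphMeasure]; exact measure_ne_top _ _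

/-- Hölder's inequality between `L^p` and `L^q` quasinorms, `0 < p < q`. -/
lemma lpS_le_lpS (n : ℕ) {p q : ℝ} (hp : 0 < p) (hpq : p < q) {f : Sph n → ℝ}
    (hf : Measurable f) :
    lpS n p f ≤ (sphMeasure n Set.univ) ^ (1/p - 1/q) * lpS n q f := by
  have hq : 0 < q := hp.trans hpq
  set F : Sph n → ℝ≥0∞ := fun ξ => ENNReal.ofReal (f ξ) with hF
  have hFm : Measurable F := ENNReal.measurable_ofReal.comp hf
  have ha1 : 1 < q / p := (one_lt_div hp).2 hpq
  have hab : (q/p).HolderConjugate (Real.conjExponent (q/p)) :=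
    Real.HolderConjugate.conjExponent ha1
  have hold := ENNReal.lintegral_mul_le_Lp_mul_Lq (sphMeasure n) hab
    ((hFm.pow_const p).aemeasurable) (aemeasurable_const (b := (1:ℝ≥0∞)))
  -- simplify hold
  simp only [Pi.mul_apply, mul_one, ENNReal.one_rpow, lintegral_one] at hold
  have e2 : ∀ ξ, (F ξ ^ p) ^ (q/p) = F ξ ^ q := by
    intro ξ
    rw [← ENNReal.rpow_mul]
    congr 1
    field_simp
  simp only [e2] at hold
  -- hold : ∫ F^p ≤ (∫ F^q)^(p/q) * S^(1/conj)
  have hcj : 1 / Real.conjExponent (q/p) = 1 - p/q := by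
    rw [Real.conjExponent]
    field_simp
  have hpq' : 1 / (q/p) = p / q := by field_simp
  rw [hcj, hpq'] at hold
  -- raise to power 1/p
  have := ENNReal.rpow_le_rpow hold (le_of_lt (by positivity : (0:ℝ) < 1/p))
  rw [lpS, lpS]
  refine le_trans this (le_of_eq ?_)
  have k1 : (p/q) * (1/p) = 1/q := by field_simp
  have k2 : (1 - p/q) * (1/p) = 1/p - 1/q := by field_simp
  rw [ENNReal.mul_rpow_of_nonneg _ _ (by positivity : (0:ℝ) ≤ 1/p),
    ← ENNReal.rpow_mul, ← ENNReal.rpow_mul, k1, k2, mul_comm]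

/-- Scaling of the `L^p` quasinorm by division by a positive constant. -/
lemma lpS_div (n : ℕ) {p : ℝ} (hp : 0 < p) (f : Sph n → ℝ) {a : ℝ} (ha : 0 < a) :
    lpS n p (fun ξ => f ξ / a) = lpS n p f * (ENNReal.ofReal a)⁻¹ := by
  have hA0 : ENNReal.ofReal a ≠ 0 := by
    simp only [ne_eq, ENNReal.ofReal_eq_zero, not_le]; exact ha
  have hAt : (ENNReal.ofReal a)⁻¹ ≠ ⊤ := by simp [hA0]
  have e1 : ∀ ξ, ENNReal.ofReal (f ξ / a) ^ p
      = (ENNReal.ofReal a)⁻¹ ^ p * ENNReal.ofReal (f ξ) ^ p := by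
    intro ξ
    rw [ENNReal.ofReal_div_of_pos ha, ENNReal.div_eq_inv_mul,
      ENNReal.mul_rpow_of_nonneg _ _ hp.le]
  rw [lpS, lpS]
  simp only [e1]
  rw [lintegral_const_mul' _ _ (by simp [hA0] : ((ENNReal.ofReal a)⁻¹ ^ p) ≠ ⊤),
    ENNReal.mul_rpow_of_nonneg _ _ (by positivity : (0:ℝ) ≤ 1/p),
    ← ENNReal.rpow_mul, mul_one_div_cancel hp.ne', ENNReal.rpow_one, mul_comm]

/-- Scaling of the double integral. -/
lemma dblInt_div (n : ℕ) (e : ℝ) (f g : Sph n → ℝ) {a b : ℝ} (ha : 0 < a) (hb : 0 < b) :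
    dblInt n e (fun ξ => f ξ / a) (fun η => g η / b)
      = (ENNReal.ofReal a)⁻¹ * (ENNReal.ofReal b)⁻¹ * dblInt n e f g := by
  have hA0 : ENNReal.ofReal a ≠ 0 := by
    simp only [ne_eq, ENNReal.ofReal_eq_zero, not_le]; exact ha
  have hB0 : ENNReal.ofReal b ≠ 0 := by
    simp only [ne_eq, ENNReal.ofReal_eq_zero, not_le]; exact hb
  have hc : (ENNReal.ofReal a)⁻¹ * (ENNReal.ofReal b)⁻¹ ≠ ⊤ :=
    ENNReal.mul_ne_top (by simp [hA0]) (by simp [hB0])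
  rw [dblInt, dblInt, ← lintegral_const_mul' _ _ hc]
  refine lintegral_congr fun ξ => ?_
  rw [← lintegral_const_mul' _ _ hc]
  refine lintegral_congr fun η => ?_
  rw [ENNReal.ofReal_div_of_pos ha, ENNReal.ofReal_div_of_pos hb,
    ENNReal.div_eq_inv_mul, ENNReal.div_eq_inv_mul]
  ring

/-- The infimum bound for functions with arbitrary (finite, nonzero) norms. -/
lemma NQap_mul_le (n : ℕ) (e : ℝ) {p : ℝ} (hp : 0 < p) {f g : Sph n → ℝ}
    (hfm : Measurable f) (hgm : Measurable g) (hf0 : ∀ ξ, 0 ≤ f ξ) (hg0 : ∀ ξ, 0 ≤ g ξ)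
    (hfn0 : lpS n p f ≠ 0) (hfnt : lpS n p f ≠ ⊤)
    (hgn0 : lpS n p g ≠ 0) (hgnt : lpS n p g ≠ ⊤) :
    NQap n e p * (lpS n p f * lpS n p g) ≤ dblInt n e f g := by
  set A := lpS n p f with hA
  set B := lpS n p g with hB
  have haR : 0 < A.toReal := ENNReal.toReal_pos hfn0 hfnt
  have hbR : 0 < B.toReal := ENNReal.toReal_pos hgn0 hgnt
  have hAre : ENNReal.ofReal A.toReal = A := ENNReal.ofReal_toReal hfnt
  have hBre : ENNReal.ofReal B.toReal = B := ENNReal.ofReal_toReal hgnt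
  have hmem : dblInt n e (fun ξ => f ξ / A.toReal) (fun η => g η / B.toReal) ∈
      { I : ℝ≥0∞ | ∃ f g : Sph n → ℝ, Measurable f ∧ Measurable g ∧
        (∀ ξ, 0 ≤ f ξ) ∧ (∀ ξ, 0 ≤ g ξ) ∧ lpS n p f = 1 ∧ lpS n p g = 1 ∧
        I = dblInt n e f g } := by
    refine ⟨_, _, hfm.div_const _, hgm.div_const _,
      fun ξ => div_nonneg (hf0 ξ) haR.le, fun ξ => div_nonneg (hg0 ξ) hbR.le, ?_, ?_, rfl⟩
    · rw [lpS_div n hp f haR, hAre, ← hA, ENNReal.mul_inv_cancel hfn0 hfnt]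
    · rw [lpS_div n hp g hbR, hBre, ← hB, ENNReal.mul_inv_cancel hgn0 hgnt]
  have hle : NQap n e p ≤ A⁻¹ * B⁻¹ * dblInt n e f g := by
    refine le_trans (sInf_le hmem) (le_of_eq ?_)
    rw [dblInt_div n e f g haR hbR, hAre, hBre]
  calc NQap n e p * (A * B) ≤ (A⁻¹ * B⁻¹ * dblInt n e f g) * (A * B) :=
        mul_le_mul_left hle _
    _ = (A⁻¹ * A) * (B⁻¹ * B) * dblInt n e f g := by ring
    _ = dblInt n e f g := by
        rw [ENNReal.inv_mul_cancel hfn0 hfnt, ENNReal.inv_mul_cancel hgn0 hgnt, one_mul, one_mul]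

lemma lpS_mono (n : ℕ) (p : ℝ) {f g : Sph n → ℝ} (h : ∀ ξ, f ξ ≤ g ξ) (hp : 0 ≤ p) :
    lpS n p f ≤ lpS n p g := by
  refine ENNReal.rpow_le_rpow (lintegral_mono fun ξ => ?_) (by positivity)
  exact ENNReal.rpow_le_rpow (ENNReal.ofReal_le_ofReal (h ξ)) hp

lemma dblInt_mono (n : ℕ) (e : ℝ) {f f' g g' : Sph n → ℝ}
    (hf : ∀ ξ, f ξ ≤ f' ξ) (hg : ∀ ξ, g ξ ≤ g' ξ) :
    dblInt n e f g ≤ dblInt n e f' g' := by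
  refine lintegral_mono fun ξ => lintegral_mono fun η => ?_
  exact mul_le_mul' (mul_le_mul' (ENNReal.ofReal_le_ofReal (hf ξ))
    (ENNReal.ofReal_le_ofReal (hg η))) le_rfl

/-- Supremum of the truncated norms recovers the norm. -/
lemma lpS_trunc_iSup (n : ℕ) {p : ℝ} (hp : 0 < p) {f : Sph n → ℝ} (hf : Measurable f) :
    ⨆ M : ℕ, lpS n p (fun ξ => min (f ξ) M) = lpS n p f := by
  have hmono : Monotone fun M : ℕ =>
      ∫⁻ ξ, ENNReal.ofReal (min (f ξ) M) ^ p ∂(sphMeasure n) := by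
    intro M K hMK
    refine lintegral_mono fun ξ => ?_
    refine ENNReal.rpow_le_rpow (ENNReal.ofReal_le_ofReal ?_) hp.le
    exact min_le_min le_rfl (by exact_mod_cast Nat.cast_le.2 hMK)
  have hmeas : ∀ M : ℕ, Measurable fun ξ : Sph n => ENNReal.ofReal (min (f ξ) (M:ℝ)) ^ p :=
    fun M => (ENNReal.measurable_ofReal.comp (hf.min measurable_const)).pow_const p
  have hmono' : Monotone fun (M:ℕ) (ξ : Sph n) => ENNReal.ofReal (min (f ξ) (M:ℝ)) ^ p := by
    intro M K hMK
    intro ξ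
    refine ENNReal.rpow_le_rpow (ENNReal.ofReal_le_ofReal ?_) hp.le
    exact min_le_min le_rfl (by exact_mod_cast Nat.cast_le.2 hMK)
  have key := lintegral_iSup (μ := sphMeasure n) hmeas hmono'
  have hsup : ⨆ M : ℕ, ∫⁻ ξ, ENNReal.ofReal (min (f ξ) M) ^ p ∂(sphMeasure n)
      = ∫⁻ ξ, ENNReal.ofReal (f ξ) ^ p ∂(sphMeasure n) := by
    rw [← key]
    refine lintegral_congr fun ξ => ?_
    refine le_antisymm (iSup_le fun M => ?_) ?_
    · exact ENNReal.rpow_le_rpow (ENNReal.ofReal_le_ofReal (min_le_left _ _)) hp.le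
    · obtain ⟨M, hM⟩ := exists_nat_ge (f ξ)
      refine le_iSup_of_le M (le_of_eq ?_)
      rw [min_eq_left hM]
  have hcont : Continuous fun x : ℝ≥0∞ => x ^ (1/p) := ENNReal.continuous_rpow_const
  have hmono2 : Monotone fun M : ℕ => lpS n p (fun ξ => min (f ξ) M) := by
    intro M K hMK
    exact lpS_mono n p (fun ξ => min_le_min le_rfl (by exact_mod_cast Nat.cast_le.2 hMK)) hp.le
  refine iSup_eq_of_tendsto hmono2 ?_
  rw [lpS, ← hsup]
  exact (hcont.tendsto _).comp (tendsto_atTop_iSup hmono)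

lemma lpS_trunc_ne_top (n : ℕ) {q : ℝ} (hq : 0 < q) (f : Sph n → ℝ) (M : ℝ) :
    lpS n q (fun ξ => min (f ξ) M) ≠ ⊤ := by
  have hb : ∫⁻ ξ, ENNReal.ofReal (min (f ξ) M) ^ q ∂(sphMeasure n)
      ≤ ENNReal.ofReal M ^ q * sphMeasure n Set.univ := by
    calc ∫⁻ ξ, ENNReal.ofReal (min (f ξ) M) ^ q ∂(sphMeasure n)
        ≤ ∫⁻ _, ENNReal.ofReal M ^ q ∂(sphMeasure n) := by
          refine lintegral_mono fun ξ => ?_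
          exact ENNReal.rpow_le_rpow (ENNReal.ofReal_le_ofReal (min_le_right _ _)) hq.le
      _ = ENNReal.ofReal M ^ q * sphMeasure n Set.univ := by
          rw [lintegral_const]
  have hfin : ∫⁻ ξ, ENNReal.ofReal (min (f ξ) M) ^ q ∂(sphMeasure n) ≠ ⊤ := by
    refine ne_top_of_le_ne_top ?_ hb
    exact ENNReal.mul_ne_top (ENNReal.rpow_ne_top_of_nonneg hq.le ENNReal.ofReal_ne_top)
      (sphMeasure_univ_ne_top n)
  exact ENNReal.rpow_ne_top_of_nonneg (by positivity) hfin

/-- Lower bound: the subcritical constant dominates a multiple of the critical constant. -/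
lemma NQap_lower (n : ℕ) (e : ℝ) {p q : ℝ} (hp : 0 < p) (hpq : p < q) {f g : Sph n → ℝ}
    (hfm : Measurable f) (hgm : Measurable g) (hf0 : ∀ ξ, 0 ≤ f ξ) (hg0 : ∀ ξ, 0 ≤ g ξ)
    (hf1 : lpS n p f = 1) (hg1 : lpS n p g = 1) :
    NQap n e q * (sphMeasure n Set.univ ^ (1/q - 1/p)) ^ (2:ℕ) ≤ dblInt n e f g := by
  have hq : 0 < q := hp.trans hpq
  set S := sphMeasure n Set.univ with hS
  have hS0 : S ≠ 0 := sphMeasure_univ_ne_zero n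
  have hSt : S ≠ ⊤ := sphMeasure_univ_ne_top n
  set s := S ^ (1/q - 1/p) with hs
  have hs0 : s ≠ 0 := (ENNReal.rpow_pos (lt_of_le_of_ne (zero_le) (Ne.symm hS0)) hSt).ne'
  have hst : s ≠ ⊤ := by
    rw [hs, ← ENNReal.ofReal_toReal hSt,
      ENNReal.ofReal_rpow_of_pos (ENNReal.toReal_pos hS0 hSt)]
    exact ENNReal.ofReal_ne_top
  set N := NQap n e q with hN
  have key : ∀ M K : ℕ, (N * s ^ (2:ℕ)) * lpS n p (fun ξ => min (f ξ) M)
      * lpS n p (fun ξ => min (g ξ) K) ≤ dblInt n e f g := by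
    intro M K
    set fM : Sph n → ℝ := fun ξ => min (f ξ) M with hfM
    set gK : Sph n → ℝ := fun ξ => min (g ξ) K with hgK
    by_cases hA : lpS n p fM = 0
    · rw [hA]; simp
    by_cases hB : lpS n p gK = 0
    · rw [hB]; simp
    have hfMm : Measurable fM := hfm.min measurable_const
    have hgKm : Measurable gK := hgm.min measurable_const
    have hold1 : lpS n p fM ≤ S ^ (1/p - 1/q) * lpS n q fM := lpS_le_lpS n hp hpq hfMm
    have hold2 : lpS n p gK ≤ S ^ (1/p - 1/q) * lpS n q gK := lpS_le_lpS n hp hpq hgKm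
    have hcancel : s * S ^ (1/p - 1/q) = 1 := by
      rw [hs, ← ENNReal.rpow_add _ _ hS0 hSt]
      norm_num
    have hA'ge : s * lpS n p fM ≤ lpS n q fM := by
      calc s * lpS n p fM ≤ s * (S ^ (1/p - 1/q) * lpS n q fM) := mul_le_mul_right hold1 _
        _ = (s * S ^ (1/p - 1/q)) * lpS n q fM := by ring
        _ = lpS n q fM := by rw [hcancel, one_mul]
    have hB'ge : s * lpS n p gK ≤ lpS n q gK := by
      calc s * lpS n p gK ≤ s * (S ^ (1/p - 1/q) * lpS n q gK) := mul_le_mul_right hold2 _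
        _ = (s * S ^ (1/p - 1/q)) * lpS n q gK := by ring
        _ = lpS n q gK := by rw [hcancel, one_mul]
    have hA'0 : lpS n q fM ≠ 0 :=
      fun h => by simp [h] at hA'ge; rcases hA'ge with h' | h' <;> [exact hs0 h'; exact hA h']
    have hB'0 : lpS n q gK ≠ 0 :=
      fun h => by simp [h] at hB'ge; rcases hB'ge with h' | h' <;> [exact hs0 h'; exact hB h']
    have hA't : lpS n q fM ≠ ⊤ := lpS_trunc_ne_top n hq f M
    have hB't : lpS n q gK ≠ ⊤ := lpS_trunc_ne_top n hq g K
    have hmain := NQap_mul_le n e hq hfMm hgKm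
      (fun ξ => le_min (hf0 ξ) (by positivity)) (fun ξ => le_min (hg0 ξ) (by positivity))
      hA'0 hA't hB'0 hB't
    calc (N * s ^ (2:ℕ)) * lpS n p fM * lpS n p gK
        = N * ((s * lpS n p fM) * (s * lpS n p gK)) := by ring
      _ ≤ N * (lpS n q fM * lpS n q gK) :=
          mul_le_mul_right (mul_le_mul' hA'ge hB'ge) _
      _ ≤ dblInt n e fM gK := hmain
      _ ≤ dblInt n e f g := dblInt_mono n e (fun ξ => min_le_left _ _) (fun η => min_le_left _ _)
  -- take suprema
  have h1 : ∀ K : ℕ, (N * s ^ (2:ℕ)) * lpS n p f * lpS n p (fun ξ => min (g ξ) K)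
      ≤ dblInt n e f g := by
    intro K
    rw [← lpS_trunc_iSup n hp hfm, ENNReal.mul_iSup, ENNReal.iSup_mul]
    exact iSup_le fun M => key M K
  have h2 : (N * s ^ (2:ℕ)) * lpS n p f * lpS n p g ≤ dblInt n e f g := by
    rw [← lpS_trunc_iSup n hp hgm, ENNReal.mul_iSup]
    exact iSup_le fun K => h1 K
  rw [hf1, hg1] at h2
  calc N * s ^ (2:ℕ) = (N * s ^ (2:ℕ)) * 1 * 1 := by ring
    _ ≤ dblInt n e f g := h2

/-- Upper bound: subcritical constant via bounded critical competitors. -/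
lemma NQap_upper (n : ℕ) (e : ℝ) {p q : ℝ} (hp : 0 < p) (hpq : p < q) {f g : Sph n → ℝ}
    (hfm : Measurable f) (hgm : Measurable g) (hf0 : ∀ ξ, 0 ≤ f ξ) (hg0 : ∀ ξ, 0 ≤ g ξ)
    {M : ℝ} (hM : 1 ≤ M) (hfM : ∀ ξ, f ξ ≤ M) (hgM : ∀ ξ, g ξ ≤ M)
    (hf1 : lpS n q f = 1) (hg1 : lpS n q g = 1) :
    NQap n e p ≤ dblInt n e f g * ENNReal.ofReal M ^ (2*(q-p)/p) := by
  have hq : 0 < q := hp.trans hpq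
  have hM0 : (0:ℝ) < M := lt_of_lt_of_le one_pos hM
  have hMe0 : ENNReal.ofReal M ≠ 0 := by
    simp only [ne_eq, ENNReal.ofReal_eq_zero, not_le]; exact hM0
  have hMet : ENNReal.ofReal M ≠ ⊤ := ENNReal.ofReal_ne_top
  set C : ℝ≥0∞ := ENNReal.ofReal M ^ (q - p) with hC
  have hC0 : C ≠ 0 :=
    (ENNReal.rpow_pos (lt_of_le_of_ne (zero_le) (Ne.symm hMe0)) hMet).ne'
  have hCt : C ≠ ⊤ := ENNReal.rpow_ne_top_of_nonneg (sub_nonneg.2 hpq.le) hMet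
  set m : ℝ≥0∞ := ENNReal.ofReal M ^ ((p - q)/p) with hm
  have hm0 : m ≠ 0 :=
    (ENNReal.rpow_pos (lt_of_le_of_ne (zero_le) (Ne.symm hMe0)) hMet).ne'
  have hmt : m ≠ ⊤ := by
    rw [hm, ENNReal.ofReal_rpow_of_pos hM0]
    exact ENNReal.ofReal_ne_top
  -- lower bound on the p-norms
  have hlow : ∀ h : Sph n → ℝ, (∀ ξ, 0 ≤ h ξ) → (∀ ξ, h ξ ≤ M) → lpS n q h = 1 →
      m ≤ lpS n p h := by
    intro h h0 hhM h1
    have hpt : ∀ ξ, ENNReal.ofReal (h ξ) ^ q ≤ ENNReal.ofReal (h ξ) ^ p * C := by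
      intro ξ
      have : ENNReal.ofReal (h ξ) ^ q
          = ENNReal.ofReal (h ξ) ^ p * ENNReal.ofReal (h ξ) ^ (q - p) := by
        rw [← ENNReal.rpow_add_of_nonneg p (q-p) hp.le (sub_nonneg.2 hpq.le)]
        ring_nf
      rw [this]
      exact mul_le_mul_right (ENNReal.rpow_le_rpow
        (ENNReal.ofReal_le_ofReal (hhM ξ)) (sub_nonneg.2 hpq.le)) _
    have hint : (1:ℝ≥0∞) ≤ C * ∫⁻ ξ, ENNReal.ofReal (h ξ) ^ p ∂(sphMeasure n) := by
      have h1' : ∫⁻ ξ, ENNReal.ofReal (h ξ) ^ q ∂(sphMeasure n) = 1 := by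
        have := congrArg (fun x : ℝ≥0∞ => x ^ q) h1
        simpa only [lpS, ← ENNReal.rpow_mul, one_div, inv_mul_cancel₀ hq.ne',
          ENNReal.rpow_one, ENNReal.one_rpow] using this
      calc (1:ℝ≥0∞) = ∫⁻ ξ, ENNReal.ofReal (h ξ) ^ q ∂(sphMeasure n) := h1'.symm
        _ ≤ ∫⁻ ξ, C * (ENNReal.ofReal (h ξ) ^ p) ∂(sphMeasure n) :=
            lintegral_mono fun ξ => (hpt ξ).trans_eq (mul_comm _ _)
        _ = C * ∫⁻ ξ, ENNReal.ofReal (h ξ) ^ p ∂(sphMeasure n) :=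
            lintegral_const_mul' _ _ hCt
    have hip : C⁻¹ ≤ ∫⁻ ξ, ENNReal.ofReal (h ξ) ^ p ∂(sphMeasure n) := by
      calc C⁻¹ = C⁻¹ * 1 := (mul_one _).symm
        _ ≤ C⁻¹ * (C * ∫⁻ ξ, ENNReal.ofReal (h ξ) ^ p ∂(sphMeasure n)) :=
            mul_le_mul_right hint _
        _ = (C⁻¹ * C) * ∫⁻ ξ, ENNReal.ofReal (h ξ) ^ p ∂(sphMeasure n) := (mul_assoc _ _ _).symm
        _ = ∫⁻ ξ, ENNReal.ofReal (h ξ) ^ p ∂(sphMeasure n) := by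
            rw [ENNReal.inv_mul_cancel hC0 hCt, one_mul]
    have : (C⁻¹) ^ (1/p) ≤ lpS n p h := ENNReal.rpow_le_rpow hip (by positivity)
    refine le_trans (le_of_eq ?_) this
    rw [hm, hC, ← ENNReal.rpow_neg, ← ENNReal.rpow_mul]
    congr 1
    field_simp
    ring
  have hAm := hlow f hf0 hfM hf1
  have hBm := hlow g hg0 hgM hg1
  have hA0 : lpS n p f ≠ 0 := fun h => hm0 (le_antisymm (h ▸ hAm) (zero_le))
  have hB0 : lpS n p g ≠ 0 := fun h => hm0 (le_antisymm (h ▸ hBm) (zero_le))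
  have hAt : lpS n p f ≠ ⊤ := by
    refine ne_top_of_le_ne_top ?_ (lpS_le_lpS n hp hpq hfm)
    rw [hf1, mul_one]
    have : sphMeasure n Set.univ ^ (1/p - 1/q) ≠ ⊤ :=
      ENNReal.rpow_ne_top_of_nonneg (by rw [sub_nonneg]; exact one_div_le_one_div_of_le hp hpq.le)
        (sphMeasure_univ_ne_top n)
    exact this
  have hBt : lpS n p g ≠ ⊤ := by
    refine ne_top_of_le_ne_top ?_ (lpS_le_lpS n hp hpq hgm)
    rw [hg1, mul_one]
    exact ENNReal.rpow_ne_top_of_nonneg (by rw [sub_nonneg]; exact one_div_le_one_div_of_le hp hpq.le)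
      (sphMeasure_univ_ne_top n)
  have hmain := NQap_mul_le n e hp hfm hgm hf0 hg0 hA0 hAt hB0 hBt
  have hdiv : NQap n e p ≤ dblInt n e f g / (lpS n p f * lpS n p g) :=
    (ENNReal.le_div_iff_mul_le (Or.inl (mul_ne_zero hA0 hB0))
      (Or.inl (ENNReal.mul_ne_top hAt hBt))).2 hmain
  have hmm : m * m ≤ lpS n p f * lpS n p g := mul_le_mul' hAm hBm
  calc NQap n e p ≤ dblInt n e f g / (lpS n p f * lpS n p g) := hdiv
    _ = dblInt n e f g * (lpS n p f * lpS n p g)⁻¹ := by rw [ENNReal.div_eq_inv_mul, mul_comm]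
    _ ≤ dblInt n e f g * (m * m)⁻¹ := mul_le_mul_right (ENNReal.inv_le_inv' hmm) _
    _ = dblInt n e f g * ENNReal.ofReal M ^ (2*(q-p)/p) := by
        rw [hm, ← ENNReal.rpow_add _ _ hMe0 hMet, ← ENNReal.rpow_neg]
        congr 1
        field_simp
        ring

/-- For a positive finite `x`, `x ^ y → 1` as `y → 0`. -/
lemma tendsto_rpow_exponent_zero {x : ℝ≥0∞} (hx0 : x ≠ 0) (hxt : x ≠ ⊤) :
    Tendsto (fun y : ℝ => x ^ y) (nhds 0) (nhds 1) := by
  have hr : 0 < x.toReal := ENNReal.toReal_pos hx0 hxt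
  have hxe : ∀ y : ℝ, x ^ y = ENNReal.ofReal (x.toReal ^ y) := by
    intro y
    conv_lhs => rw [← ENNReal.ofReal_toReal hxt]
    rw [ENNReal.ofReal_rpow_of_pos hr]
  simp only [hxe]
  have hcont : ContinuousAt (fun y : ℝ => x.toReal ^ y) 0 :=
    Real.continuousAt_const_rpow hr.ne'
  have ht : Tendsto (fun y : ℝ => x.toReal ^ y) (nhds 0) (nhds 1) := by
    have := hcont.tendsto
    rwa [Real.rpow_zero] at this
  have := (ENNReal.continuous_ofReal.tendsto 1).comp ht
  simpa [Function.comp_def] using this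

/-- The subcritical sharp constants converge to the critical one as `p → p_α⁻`. -/
theorem subcritical_constant_tendsto (n : ℕ) (hn : 1 ≤ n) (Q α pα : ℝ)
    (hQ : Q = 2 * n + 2) (hα : Q < α) (hpα : pα = 2 * Q / (Q + α)) :
    Tendsto (fun p => NQap n ((α - Q) / 2) p)
      (nhdsWithin pα (Set.Iio pα)) (nhds (NQap n ((α - Q) / 2) pα)) := by
  set E : ℝ := (α - Q) / 2 with hE
  have hQpos : 0 < Q := by rw [hQ]; positivity
  have hq : 0 < pα := by
    rw [hpα]
    have : 0 < Q + α := by linarith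
    positivity
  have hS0 : sphMeasure n Set.univ ≠ 0 := sphMeasure_univ_ne_zero n
  have hSt : sphMeasure n Set.univ ≠ ⊤ := sphMeasure_univ_ne_top n
  have hIoo : Set.Ioo (0:ℝ) pα ∈ nhdsWithin pα (Set.Iio pα) :=
    Ioo_mem_nhdsLT_of_mem ⟨hq, le_rfl⟩
  rw [tendsto_order]
  constructor
  · -- lower bound
    intro a ha
    have t1 : Tendsto (fun p : ℝ => 1/pα - 1/p) (nhdsWithin pα (Set.Iio pα)) (nhds 0) := by
      have hc : ContinuousAt (fun p : ℝ => 1/pα - 1/p) pα :=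
        continuousAt_const.sub (continuousAt_const.div continuousAt_id hq.ne')
      have := hc.tendsto
      rw [sub_self] at this
      exact this.mono_left nhdsWithin_le_nhds
    have t2 : Tendsto (fun p : ℝ => sphMeasure n Set.univ ^ (1/pα - 1/p))
        (nhdsWithin pα (Set.Iio pα)) (nhds 1) :=
      (tendsto_rpow_exponent_zero hS0 hSt).comp t1
    have t3 : Tendsto (fun p : ℝ => (sphMeasure n Set.univ ^ (1/pα - 1/p)) ^ (2:ℕ))
        (nhdsWithin pα (Set.Iio pα)) (nhds 1) := by
      have := ENNReal.Tendsto.mul t2 (Or.inl one_ne_zero) t2 (Or.inl one_ne_zero)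
      rw [mul_one] at this
      simpa only [pow_two] using this
    have t4 : Tendsto (fun p : ℝ => NQap n E pα * (sphMeasure n Set.univ ^ (1/pα - 1/p)) ^ (2:ℕ))
        (nhdsWithin pα (Set.Iio pα)) (nhds (NQap n E pα)) := by
      have := ENNReal.Tendsto.const_mul (a := NQap n E pα) t3 (Or.inl one_ne_zero)
      rwa [mul_one] at this
    filter_upwards [hIoo, t4.eventually (lt_mem_nhds ha)] with p hp hlt
    refine hlt.trans_le (le_sInf ?_)
    rintro I ⟨f, g, hfm, hgm, hf0, hg0, hf1, hg1, rfl⟩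
    exact NQap_lower n E hp.1 hp.2 hfm hgm hf0 hg0 hf1 hg1
  · -- upper bound
    intro a ha
    obtain ⟨J, hJ1, hJ2⟩ := exists_between ha
    have hJ0 : J ≠ 0 := (lt_of_le_of_lt (zero_le) hJ1).ne'
    have hJt : J ≠ ⊤ := hJ2.ne_top
    obtain ⟨I, hImem, hIJ⟩ := sInf_lt_iff.1 hJ1
    obtain ⟨f, g, hfm, hgm, hf0, hg0, hf1, hg1, rfl⟩ := hImem
    set r := dblInt n E f g with hr
    -- truncations
    set aM : ℕ → ℝ≥0∞ := fun M => lpS n pα (fun ξ => min (f ξ) M) with haM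
    set bM : ℕ → ℝ≥0∞ := fun M => lpS n pα (fun ξ => min (g ξ) M) with hbM
    have hamono : Monotone aM := fun M K hMK =>
      lpS_mono n pα (fun ξ => min_le_min le_rfl (by exact_mod_cast Nat.cast_le.2 hMK)) hq.le
    have hbmono : Monotone bM := fun M K hMK =>
      lpS_mono n pα (fun ξ => min_le_min le_rfl (by exact_mod_cast Nat.cast_le.2 hMK)) hq.le
    have supa : ⨆ M : ℕ, aM M = 1 := by rw [haM]; rw [lpS_trunc_iSup n hq hfm, hf1]
    have supb : ⨆ M : ℕ, bM M = 1 := by rw [hbM]; rw [lpS_trunc_iSup n hq hgm, hg1]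
    have hsprod : (⨆ M : ℕ, aM M * bM M) = 1 := by
      refine le_antisymm (iSup_le fun M => ?_) ?_
      · exact mul_le_one' (supa ▸ le_iSup aM M) (supb ▸ le_iSup bM M)
      · calc (1:ℝ≥0∞) = (⨆ M : ℕ, aM M) * ⨆ K : ℕ, bM K := by rw [supa, supb, mul_one]
          _ = ⨆ M : ℕ, aM M * ⨆ K : ℕ, bM K := ENNReal.iSup_mul _ _
          _ = ⨆ M : ℕ, ⨆ K : ℕ, aM M * bM K := iSup_congr fun M => ENNReal.mul_iSup _ _
          _ ≤ ⨆ L : ℕ, aM L * bM L := by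
              refine iSup_le fun M => iSup_le fun K => le_iSup_of_le (max M K) ?_
              exact mul_le_mul' (hamono (le_max_left M K)) (hbmono (le_max_right M K))
    have hrJ : r / J < 1 := by
      rw [ENNReal.div_lt_iff (Or.inl hJ0) (Or.inl hJt), one_mul]
      exact hIJ
    obtain ⟨M, hMlt⟩ : ∃ M : ℕ, r / J < aM M * bM M := by
      rw [← hsprod] at hrJ
      exact lt_iSup_iff.1 hrJ
    set A := aM M with hA
    set B := bM M with hB
    have hABr : r < (A * B) * J := (ENNReal.div_lt_iff (Or.inl hJ0) (Or.inl hJt)).1 hMlt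
    have hAB0 : A * B ≠ 0 := fun h => by simp [h] at hMlt
    have hA0 : A ≠ 0 := fun h => hAB0 (by rw [h, zero_mul])
    have hB0 : B ≠ 0 := fun h => hAB0 (by rw [h, mul_zero])
    have hAt : A ≠ ⊤ := lpS_trunc_ne_top n hq f M
    have hBt : B ≠ ⊤ := lpS_trunc_ne_top n hq g M
    have haR : 0 < A.toReal := ENNReal.toReal_pos hA0 hAt
    have hbR : 0 < B.toReal := ENNReal.toReal_pos hB0 hBt
    have hAre : ENNReal.ofReal A.toReal = A := ENNReal.ofReal_toReal hAt
    have hBre : ENNReal.ofReal B.toReal = B := ENNReal.ofReal_toReal hBt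
    -- normalized bounded competitors
    set F : Sph n → ℝ := fun ξ => min (f ξ) M / A.toReal with hF
    set G : Sph n → ℝ := fun ξ => min (g ξ) M / B.toReal with hG
    have hFm : Measurable F := (hfm.min measurable_const).div_const _
    have hGm : Measurable G := (hgm.min measurable_const).div_const _
    have hF0 : ∀ ξ, 0 ≤ F ξ := fun ξ => div_nonneg (le_min (hf0 ξ) (by positivity)) haR.le
    have hG0 : ∀ ξ, 0 ≤ G ξ := fun ξ => div_nonneg (le_min (hg0 ξ) (by positivity)) hbR.le
    have hF1 : lpS n pα F = 1 := by
      rw [hF, lpS_div n hq _ haR, hAre]; exact ENNReal.mul_inv_cancel hA0 hAt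
    have hG1 : lpS n pα G = 1 := by
      rw [hG, lpS_div n hq _ hbR, hBre]; exact ENNReal.mul_inv_cancel hB0 hBt
    set M' : ℝ := max 1 (max ((M:ℝ) / A.toReal) ((M:ℝ) / B.toReal)) with hM'
    have hM'1 : 1 ≤ M' := le_max_left _ _
    have hFb : ∀ ξ, F ξ ≤ M' := by
      intro ξ
      refine le_trans ?_ (le_trans (le_max_left _ _) (le_max_right _ _))
      exact div_le_div_of_nonneg_right (min_le_right _ _) haR.le
    have hGb : ∀ ξ, G ξ ≤ M' := by
      intro ξ
      refine le_trans ?_ (le_trans (le_max_right _ _) (le_max_right _ _))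
      exact div_le_div_of_nonneg_right (min_le_right _ _) hbR.le
    -- the double integral of the normalized competitors is < J
    have hDeq : dblInt n E F G = (ENNReal.ofReal A.toReal)⁻¹ * (ENNReal.ofReal B.toReal)⁻¹ *
        dblInt n E (fun ξ => min (f ξ) M) (fun η => min (g η) M) :=
      dblInt_div n E (fun ξ => min (f ξ) M) (fun η => min (g η) M) haR hbR
    rw [hAre, hBre] at hDeq
    have hDle : dblInt n E F G ≤ A⁻¹ * B⁻¹ * r := by
      rw [hDeq]
      exact mul_le_mul_right
        (dblInt_mono n E (fun ξ => min_le_left _ _) (fun η => min_le_left _ _)) _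
    have h2 : A⁻¹ * B⁻¹ * r = r * (A*B)⁻¹ := by
      rw [ENNReal.mul_inv (Or.inl hA0) (Or.inl hAt)]; ring
    have h3 : r * (A*B)⁻¹ < ((A*B)*J) * (A*B)⁻¹ := by
      refine ENNReal.mul_lt_mul_left ?_ ?_ hABr
      · simp [ENNReal.mul_ne_top hAt hBt]
      · simp [hAB0]
    have h4 : ((A*B)*J) * (A*B)⁻¹ = J := by
      rw [mul_comm (A*B) J, mul_assoc, ENNReal.mul_inv_cancel hAB0
        (ENNReal.mul_ne_top hAt hBt), mul_one]
    have hD : dblInt n E F G < J := by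
      refine lt_of_le_of_lt (hDle.trans h2.le) ?_
      rw [← h4]
      exact h3
    have hDa : dblInt n E F G < a := hD.trans hJ2
    -- limit of the upper envelope
    have hM'0 : ENNReal.ofReal M' ≠ 0 := by
      simp only [ne_eq, ENNReal.ofReal_eq_zero, not_le]
      linarith
    have texp : Tendsto (fun p : ℝ => 2*(pα - p)/p) (nhdsWithin pα (Set.Iio pα)) (nhds 0) := by
      have hc : ContinuousAt (fun p : ℝ => 2*(pα - p)/p) pα :=
        (continuousAt_const.mul (continuousAt_const.sub continuousAt_id)).div
          continuousAt_id hq.ne'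
      have h0 : 2*(pα - pα)/pα = 0 := by rw [sub_self, mul_zero, zero_div]
      have := hc.tendsto
      rw [h0] at this
      exact this.mono_left nhdsWithin_le_nhds
    have tmul : Tendsto (fun p : ℝ => ENNReal.ofReal M' ^ (2*(pα - p)/p))
        (nhdsWithin pα (Set.Iio pα)) (nhds 1) :=
      (tendsto_rpow_exponent_zero hM'0 ENNReal.ofReal_ne_top).comp texp
    have tu : Tendsto (fun p : ℝ => dblInt n E F G * ENNReal.ofReal M' ^ (2*(pα - p)/p))
        (nhdsWithin pα (Set.Iio pα)) (nhds (dblInt n E F G)) := by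
      have := ENNReal.Tendsto.const_mul (a := dblInt n E F G) tmul (Or.inl one_ne_zero)
      rwa [mul_one] at this
    filter_upwards [hIoo, tu.eventually (Iio_mem_nhds hDa)] with p hp hu
    exact lt_of_le_of_lt
      (NQap_upper n E hp.1 hp.2 hFm hGm hF0 hG0 hM'1 hFb hGb hF1 hG1) hu
end
end
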